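/- arXiv:1703.00677 — 6 statements merged into one kernel-verified Lean document; each statement's English description precedes it below -/
import Mathlib

section
/- Let (S,d) be a complete separable metric space and let (μ_n) be a sequence of Borel probability measures on S such that for every f ∈ BL(S) the sequence ∫_S f dμ_n converges in ℝ. Then the family {μ_n : n ≥ 1} is uniformly tight, i.e., for every ε > 0 there exists a compact set K ⊆ S with μ_n(S∖K) < ε for all n. -/
open MeasureTheory Filter Topology

/-- A function is bounded Lipschitz. -/
def IsBL {S : Type*} [PseudoMetricSpace S] (f : S → ℝ) : Prop :=
  (∃ C : ℝ, ∀ x, |f x| ≤ C) ∧ ∃ K : NNReal, LipschitzWith K f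

namespace TightnessBLAux
open Metric


lemma min_sub_min_le (a b c d : ℝ) : min a b - min c d ≤ max |a - c| |b - d| := by
  set M := max |a - c| |b - d| with hM
  have h1 : a ≤ c + M := by
    have := le_abs_self (a - c); have := le_max_left |a - c| |b - d|; linarith
  have h2 : b ≤ d + M := by
    have := le_abs_self (b - d); have := le_max_right |a - c| |b - d|; linarith
  have : min a b ≤ min (c + M) (d + M) := min_le_min h1 h2
  rw [min_add_add_right] at this
  linarith

lemma abs_min_sub_min (a b c d : ℝ) : |min a b - min c d| ≤ max |a - c| |b - d| := by
  rw [abs_sub_le_iff]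
  refine ⟨min_sub_min_le a b c d, ?_⟩
  have := min_sub_min_le c d a b
  rwa [abs_sub_comm c a, abs_sub_comm d b] at this

lemma max_sub_max_le (a b c d : ℝ) : max a b - max c d ≤ max |a - c| |b - d| := by
  set M := max |a - c| |b - d| with hM
  have h1 : a ≤ c + M := by
    have := le_abs_self (a - c); have := le_max_left |a - c| |b - d|; linarith
  have h2 : b ≤ d + M := by
    have := le_abs_self (b - d); have := le_max_right |a - c| |b - d|; linarith
  have : max a b ≤ max (c + M) (d + M) := max_le_max h1 h2
  rw [max_add_add_right] at this
  linarith

lemma abs_max_sub_max (a b c d : ℝ) : |max a b - max c d| ≤ max |a - c| |b - d| := by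
  rw [abs_sub_le_iff]
  refine ⟨max_sub_max_le a b c d, ?_⟩
  have := max_sub_max_le c d a b
  rwa [abs_sub_comm c a, abs_sub_comm d b] at this

/-- clamp to `[0,1]`. -/
noncomputable def cl (t : ℝ) : ℝ := min 1 (max t 0)

lemma cl_nonneg (t : ℝ) : 0 ≤ cl t := le_min one_pos.le (le_max_right _ _)

lemma cl_le_one (t : ℝ) : cl t ≤ 1 := min_le_left _ _

lemma abs_cl_sub_cl (s t : ℝ) : |cl s - cl t| ≤ |s - t| := by
  refine (abs_min_sub_min 1 (max s 0) 1 (max t 0)).trans ?_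
  have h2 : |max s 0 - max t 0| ≤ |s - t| := by
    refine (abs_max_sub_max s 0 t 0).trans ?_
    simp
  simpa using h2

lemma cl_eq_one (t : ℝ) (h : 1 ≤ t) : cl t = 1 := by
  rw [cl, max_eq_left (le_trans one_pos.le h), min_eq_left h]

lemma cl_eq_zero (t : ℝ) (h : t ≤ 0) : cl t = 0 := by
  rw [cl, max_eq_right h, min_eq_right one_pos.le]

lemma pos_of_cl_pos {t : ℝ} (h : 0 < cl t) : 0 < t := by
  by_contra hc
  rw [cl_eq_zero t (not_lt.1 hc)] at h
  exact lt_irrefl 0 h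



variable {S : Type*} [MetricSpace S]

/-- union of first balls -/
def UU (e : ℕ → S) (r : ℝ) (m : ℕ) : Set S := ⋃ i ≤ m, ball (e i) r

/-- fuzzy indicator of being far from `UU` -/
noncomputable def gg (e : ℕ → S) (r : ℝ) (m : ℕ) (x : S) : ℝ :=
  min 1 (infDist x (UU e r m) / r)

variable {e : ℕ → S} {r : ℝ} {m m' : ℕ} {x : S}

lemma UU_nonempty (hr : 0 < r) : (UU e r m).Nonempty :=
  ⟨e 0, Set.mem_biUnion (Nat.zero_le m) (mem_ball_self hr)⟩

lemma UU_mono (h : m ≤ m') : UU e r m ⊆ UU e r m' := by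
  exact Set.biUnion_subset_biUnion_left (fun i (hi : i ∈ {j : ℕ | j ≤ m}) => hi.trans h)

lemma gg_nonneg (hr : 0 < r) : 0 ≤ gg e r m x :=
  le_min one_pos.le (div_nonneg infDist_nonneg hr.le)

lemma gg_le_one : gg e r m x ≤ 1 := min_le_left _ _

lemma gg_anti (hr : 0 < r) (h : m ≤ m') : gg e r m' x ≤ gg e r m x := by
  apply min_le_min le_rfl
  gcongr
  · exact infDist_le_infDist_of_subset (UU_mono h) (UU_nonempty hr)


lemma gg_lipschitz (hr : 0 < r) :
    LipschitzWith (r⁻¹).toNNReal (gg e r m) := by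
  apply LipschitzWith.of_dist_le_mul
  intro x y
  rw [Real.dist_eq]
  have h1 : |gg e r m x - gg e r m y| ≤
      |infDist x (UU e r m) / r - infDist y (UU e r m) / r| := by
    have := abs_min_sub_min 1 (infDist x (UU e r m) / r) 1 (infDist y (UU e r m) / r)
    simpa [gg] using this
  refine h1.trans ?_
  rw [div_sub_div_same, abs_div, abs_of_pos hr, div_eq_mul_inv, mul_comm,
    Real.coe_toNNReal _ (inv_nonneg.2 hr.le)]
  gcongr
  exact (by simpa [Real.dist_eq] using (lipschitz_infDist_pt (UU e r m)).dist_le_mul x y)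

lemma gg_continuous (hr : 0 < r) : Continuous (gg e r m) :=
  (gg_lipschitz hr).continuous

lemma gg_eq_zero_of_mem (h : x ∈ UU e r m) : gg e r m x = 0 := by
  rw [gg, infDist_zero_of_mem h, zero_div, min_eq_right one_pos.le]

lemma gg_eq_one (hr : 0 < r) (h : r ≤ infDist x (UU e r m)) : gg e r m x = 1 := by
  rw [gg, min_eq_left]
  rw [le_div_iff₀ hr, one_mul]
  exact h

lemma gg_eventually_zero (hr : 0 < r) (he : DenseRange e) (x : S) :
    ∀ᶠ m in atTop, gg e r m x = 0 := by
  obtain ⟨i, hi⟩ := he.exists_dist_lt x hr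
  filter_upwards [eventually_ge_atTop i] with m hm
  apply gg_eq_zero_of_mem
  exact Set.mem_biUnion hm (by rwa [mem_ball])

lemma integrable_bdd_cont {φ : S → ℝ} {C : ℝ} [MeasurableSpace S] [BorelSpace S]
    (μ : Measure S) [IsFiniteMeasure μ] (hc : Continuous φ) (hb : ∀ x, |φ x| ≤ C) :
    Integrable φ μ := by
  refine (integrable_const C).mono' hc.aestronglyMeasurable ?_
  exact Filter.Eventually.of_forall (fun x => by simpa using hb x)

lemma gg_integrable (hr : 0 < r) [MeasurableSpace S] [BorelSpace S]
    (μ : Measure S) [IsFiniteMeasure μ] : Integrable (gg e r m) μ :=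
  integrable_bdd_cont μ (gg_continuous hr)
    (fun x => abs_le.2 ⟨by linarith [gg_nonneg hr (x := x) (m := m) (e := e)], gg_le_one⟩)

lemma tendsto_integral_gg (hr : 0 < r) (he : DenseRange e) [MeasurableSpace S] [BorelSpace S]
    (μ : Measure S) [IsProbabilityMeasure μ] :
    Tendsto (fun m => ∫ x, gg e r m x ∂μ) atTop (𝓝 0) := by
  have h0 : (0 : ℝ) = ∫ x, (0 : ℝ) ∂μ := by simp
  rw [h0]
  apply tendsto_integral_of_dominated_convergence (fun _ => (1 : ℝ))
  · exact fun m => (gg_continuous hr).aestronglyMeasurable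
  · exact integrable_const 1
  · intro m
    refine Filter.Eventually.of_forall (fun x => ?_)
    rw [Real.norm_eq_abs, abs_le]
    exact ⟨by linarith [gg_nonneg hr (x := x) (m := m) (e := e)], gg_le_one⟩
  · refine Filter.Eventually.of_forall (fun x => ?_)
    exact Tendsto.congr' ((gg_eventually_zero hr he x).mono (fun m h => h.symm)) tendsto_const_nhds

lemma ramp1_ge {b c t : ℝ} (hbc : b < c) (hc : 0 ≤ c) (ht : t ≤ 1) :
    t - c ≤ cl ((t - b) / (c - b)) := by
  rcases le_total t c with h | h
  · linarith [cl_nonneg ((t - b) / (c - b))]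
  · rw [cl_eq_one _ (by rw [le_div_iff₀ (by linarith)]; linarith)]
    linarith

lemma ramp2_ge {a b s : ℝ} (ha : 0 < a) (hab : a < b) (hs : 0 ≤ s) :
    1 - s / a ≤ cl ((b - s) / (b - a)) := by
  rcases le_total s a with h | h
  · rw [cl_eq_one _ (by rw [le_div_iff₀ (by linarith)]; linarith)]
    have : 0 ≤ s / a := div_nonneg hs ha.le
    linarith
  · have h1 : 1 ≤ s / a := (one_le_div ha).2 h
    linarith [cl_nonneg ((b - s) / (b - a))]

lemma ramp2_eq_zero {a b s : ℝ} (hab : a < b) (hs : b ≤ s) :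
    cl ((b - s) / (b - a)) = 0 :=
  cl_eq_zero _ (div_nonpos_iff.2 (Or.inr ⟨by linarith, by linarith⟩))

lemma ramp1_pos {b c t : ℝ} (hbc : b < c) (h : 0 < cl ((t - b) / (c - b))) : b < t := by
  have := pos_of_cl_pos h
  have hd : 0 < c - b := by linarith
  rcases div_pos_iff.1 this with ⟨h1, _⟩ | ⟨_, h2⟩
  · linarith
  · linarith

lemma min_ge_aux {A B t s a c : ℝ} (hA : t - c ≤ A) (hB : 1 - s / a ≤ B) (ht : t ≤ 1)
    (hc : 0 ≤ c) (hsa : 0 ≤ s / a) : t - c - s / a ≤ min A B := by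
  rcases le_total A B with h | h
  · rw [min_eq_left h]; linarith
  · rw [min_eq_right h]; linarith

/-- sum of a family with at most one positive member is at most its sup -/
lemma sum_le_iSup {u : ℕ → ℝ} (h0 : ∀ t, 0 ≤ u t) (h1 : ∀ t, u t ≤ 1)
    (hd : ∀ t t', t < t' → 0 < u t' → u t = 0) (T : ℕ) :
    ∑ t ∈ Finset.range T, u t ≤ ⨆ t, u t := by
  have hbdd : BddAbove (Set.range u) := ⟨1, by rintro y ⟨t, rfl⟩; exact h1 t⟩
  have hsup0 : 0 ≤ ⨆ t, u t := le_trans (h0 0) (le_ciSup hbdd 0)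
  induction T with
  | zero => simpa using hsup0
  | succ T ih =>
    rw [Finset.sum_range_succ]
    rcases le_or_gt (u T) 0 with h | h
    · have : u T = 0 := le_antisymm h (h0 T)
      rw [this, add_zero]; exact ih
    · have hz : ∀ t ∈ Finset.range T, u t = 0 := fun t ht =>
        hd t T (Finset.mem_range.1 ht) h
      rw [Finset.sum_eq_zero hz, zero_add]
      exact le_ciSup hbdd T



lemma lipschitzWith_iSup {F : ℕ → S → ℝ} {K : NNReal} (hl : ∀ i, LipschitzWith K (F i))
    (h1 : ∀ i x, F i x ≤ 1) : LipschitzWith K (fun x => ⨆ i, F i x) := by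
  have hbdd : ∀ x, BddAbove (Set.range fun i => F i x) := fun x =>
    ⟨1, by rintro y ⟨i, rfl⟩; exact h1 i x⟩
  apply LipschitzWith.of_dist_le_mul
  intro x y
  rw [Real.dist_eq, abs_sub_le_iff]
  constructor
  · rw [sub_le_iff_le_add]
    refine ciSup_le fun i => ?_
    have h2 : F i x ≤ F i y + K * dist x y := by
      have := (hl i).dist_le_mul x y
      rw [Real.dist_eq] at this
      have := le_abs_self (F i x - F i y)
      linarith
    linarith [le_ciSup (hbdd y) i]
  · rw [sub_le_iff_le_add]
    refine ciSup_le fun i => ?_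
    have h2 : F i y ≤ F i x + K * dist x y := by
      have := (hl i).dist_le_mul x y
      rw [Real.dist_eq] at this
      have := neg_abs_le (F i x - F i y)
      linarith
    linarith [le_ciSup (hbdd x) i]

section Key

variable {S : Type*} [MetricSpace S] [MeasurableSpace S] [BorelSpace S]

set_option maxHeartbeats 2000000 in
lemma key_claim (μ : ℕ → Measure S) (hprob : ∀ n, IsProbabilityMeasure (μ n))
    (hconv : ∀ f : S → ℝ, IsBL f →
      ∃ l : ℝ, Tendsto (fun n => ∫ x, f x ∂(μ n)) atTop (𝓝 l))
    (e : ℕ → S) (he : DenseRange e) {r : ℝ} (hr : 0 < r) :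
    ∀ η : ℝ, 0 < η → ∃ m : ℕ, ∀ n, ∫ x, gg e r m x ∂(μ n) < η := by
  have hgg_abs : ∀ m (x : S), |gg e r m x| ≤ 1 := fun m x =>
    abs_le.2 ⟨by linarith [gg_nonneg (e := e) (m := m) (x := x) hr], gg_le_one⟩
  have hGBL : ∀ m, IsBL (gg e r m) :=
    fun m => ⟨⟨1, hgg_abs m⟩, ⟨_, gg_lipschitz hr⟩⟩
  choose LG hLG using fun m => hconv _ (hGBL m)
  have hgg_int : ∀ m nnn, Integrable (gg e r m) (μ nnn) := by
    intro m nnn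
    haveI := hprob nnn
    exact gg_integrable hr (μ nnn)
  have hgg_dist : ∀ m (x y : S), |gg e r m x - gg e r m y| ≤ r⁻¹ * dist x y := by
    intro m x y
    have h := (gg_lipschitz (e := e) (m := m) hr).dist_le_mul x y
    rwa [Real.dist_eq, Real.coe_toNNReal _ (inv_nonneg.2 hr.le)] at h
  -- Step A : the limits of the integrals of the `gg` go to `0`
  have stepA : ∀ η : ℝ, 0 < η → ∃ m, LG m < η := by
    intro ep hep
    by_contra hcon
    push_neg at hcon
    -- `hcon : ∀ m, ep ≤ LG m`
    have hbdd : BddBelow (Set.range LG) := ⟨ep, by rintro y ⟨m, rfl⟩; exact hcon m⟩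
    set lam := ⨅ m, LG m with hlam_def
    have hlam_le : ∀ m, lam ≤ LG m := fun m => ciInf_le hbdd m
    have heplam : ep ≤ lam := le_ciInf hcon
    have hlam_pos : 0 < lam := lt_of_lt_of_le hep heplam
    set aa := lam / 4 with haa_def
    set bb := 3 * lam / 8 with hbb_def
    set cc := lam / 2 with hcc_def
    have haa_pos : 0 < aa := by rw [haa_def]; linarith
    have hbb_pos : 0 < bb := by rw [hbb_def]; linarith
    have hab : aa < bb := by rw [haa_def, hbb_def]; linarith
    have hbc : bb < cc := by rw [hbb_def, hcc_def]; linarith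
    have hc0 : 0 ≤ cc := by rw [hcc_def]; linarith
    have hcb8 : cc - bb = lam / 8 := by rw [hbb_def, hcc_def]; ring
    have hba8 : bb - aa = lam / 8 := by rw [haa_def, hbb_def]; ring
    set chi := fun (kk kk' : ℕ) (x : S) =>
      min (cl ((gg e r kk x - bb) / (cc - bb))) (cl ((bb - gg e r kk' x) / (bb - aa)))
      with hchi_def
    have hchi_nonneg : ∀ kk kk' (x : S), 0 ≤ chi kk kk' x :=
      fun _ _ _ => le_min (cl_nonneg _) (cl_nonneg _)
    have hchi_le_one : ∀ kk kk' (x : S), chi kk kk' x ≤ 1 :=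
      fun _ _ _ => (min_le_left _ _).trans (cl_le_one _)
    set M : ℝ := (lam / 8)⁻¹ * r⁻¹ with hM_def
    have hM0 : 0 ≤ M := by
      rw [hM_def]
      have : (0:ℝ) < lam / 8 := by linarith
      positivity
    have hchi_dist : ∀ kk kk' (x y : S),
        |chi kk kk' x - chi kk kk' y| ≤ M * dist x y := by
      intro kk kk' x y
      refine (abs_min_sub_min _ _ _ _).trans (max_le ?_ ?_)
      · refine (abs_cl_sub_cl _ _).trans ?_
        rw [div_sub_div_same, abs_div, abs_of_pos (by linarith : (0:ℝ) < cc - bb)]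
        have h1 : gg e r kk x - bb - (gg e r kk y - bb) = gg e r kk x - gg e r kk y := by
          ring
        rw [h1, hcb8, div_eq_mul_inv, hM_def]
        calc |gg e r kk x - gg e r kk y| * (lam / 8)⁻¹
            ≤ (r⁻¹ * dist x y) * (lam / 8)⁻¹ := by
              apply mul_le_mul_of_nonneg_right (hgg_dist kk x y)
              have : (0:ℝ) < lam / 8 := by linarith
              positivity
          _ = (lam / 8)⁻¹ * r⁻¹ * dist x y := by ring
      · refine (abs_cl_sub_cl _ _).trans ?_
        rw [div_sub_div_same, abs_div, abs_of_pos (by linarith : (0:ℝ) < bb - aa)]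
        have h1 : bb - gg e r kk' x - (bb - gg e r kk' y) = -(gg e r kk' x - gg e r kk' y) := by
          ring
        rw [h1, abs_neg, hba8, div_eq_mul_inv, hM_def]
        calc |gg e r kk' x - gg e r kk' y| * (lam / 8)⁻¹
            ≤ (r⁻¹ * dist x y) * (lam / 8)⁻¹ := by
              apply mul_le_mul_of_nonneg_right (hgg_dist kk' x y)
              have : (0:ℝ) < lam / 8 := by linarith
              positivity
          _ = (lam / 8)⁻¹ * r⁻¹ * dist x y := by ring
    have hchi_lip : ∀ kk kk', LipschitzWith M.toNNReal (chi kk kk') := by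
      intro kk kk'
      apply LipschitzWith.of_dist_le_mul
      intro x y
      rw [Real.dist_eq, Real.coe_toNNReal _ hM0]
      exact hchi_dist kk kk' x y
    have hchi_abs : ∀ kk kk' (x : S), |chi kk kk' x| ≤ 1 := fun kk kk' x =>
      abs_le.2 ⟨by linarith [hchi_nonneg kk kk' x], hchi_le_one kk kk' x⟩
    have hchi_isBL : ∀ kk kk', IsBL (chi kk kk') :=
      fun kk kk' => ⟨⟨1, hchi_abs kk kk'⟩, ⟨_, hchi_lip kk kk'⟩⟩
    have hchi_int : ∀ kk kk' m, Integrable (chi kk kk') (μ m) := by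
      intro kk kk' m
      haveI := hprob m
      exact integrable_bdd_cont (μ m) (hchi_lip kk kk').continuous (hchi_abs kk kk')
    set tolC : ℕ → ℝ := fun j => aa * ep * (1/2)^j / 100 with htolC_def
    set tolN : ℕ → ℝ := fun j => ep * (1/2)^j / 100 with htolN_def
    have htolC_pos : ∀ j, 0 < tolC j := by
      intro j; rw [htolC_def]; positivity
    have htolN_pos : ∀ j, 0 < tolN j := by
      intro j; rw [htolN_def]; positivity
    -- one step of the recursive construction
    have Hstep : ∀ (j kj1 nj Nj : ℕ), ∃ q : ℕ × ℕ × ℕ,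
        nj < q.1 ∧ Nj ≤ q.1 ∧ kj1 < q.2.1 ∧ Nj ≤ q.2.2 ∧
        lam - ep/8 < ∫ x, gg e r kj1 x ∂(μ q.1) ∧
        ∫ x, gg e r q.2.1 x ∂(μ q.1) < tolC j ∧
        (∀ m1, q.2.2 ≤ m1 → ∀ m2, q.2.2 ≤ m2 →
          |∫ x, chi kj1 q.2.1 x ∂(μ m1) - ∫ x, chi kj1 q.2.1 x ∂(μ m2)| ≤ tolN j) := by
      intro j kj1 nj Nj
      have h1 : ∀ᶠ m in atTop, lam - ep/8 < ∫ x, gg e r kj1 x ∂(μ m) :=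
        (hLG kj1).eventually (eventually_gt_nhds (by linarith [hlam_le kj1]))
      obtain ⟨n', hn'⟩ :=
        ((eventually_gt_atTop nj).and ((eventually_ge_atTop Nj).and h1)).exists
      haveI := hprob n'
      have h2 : ∀ᶠ m in atTop, ∫ x, gg e r m x ∂(μ n') < tolC j :=
        (tendsto_integral_gg hr he (μ n')).eventually (eventually_lt_nhds (htolC_pos j))
      obtain ⟨k2, hk2⟩ := ((eventually_gt_atTop kj1).and h2).exists
      obtain ⟨l, hl⟩ := hconv _ (hchi_isBL kj1 k2)
      obtain ⟨N0, hN0⟩ := (Metric.tendsto_atTop.1 hl) (tolN j / 2) (by positivity)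
      refine ⟨⟨n', k2, max N0 Nj⟩, hn'.1, hn'.2.1, hk2.1, le_max_right _ _, hn'.2.2,
        hk2.2, ?_⟩
      intro m1 hm1 m2 hm2
      have d1 := hN0 m1 (le_trans (le_max_left _ _) hm1)
      have d2 := hN0 m2 (le_trans (le_max_left _ _) hm2)
      rw [Real.dist_eq] at d1 d2
      have htri := abs_sub_le (∫ x, chi kj1 k2 x ∂(μ m1)) l (∫ x, chi kj1 k2 x ∂(μ m2))
      rw [abs_sub_comm l (∫ x, chi kj1 k2 x ∂(μ m2))] at htri
      linarith
    -- the recursively defined sequences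
    let st0 : ℕ × ℕ × ℕ × ℕ :=
      ⟨0, (Hstep 0 0 0 0).choose.2.1, (Hstep 0 0 0 0).choose.1, (Hstep 0 0 0 0).choose.2.2⟩
    let stf : ℕ → ℕ × ℕ × ℕ × ℕ → ℕ × ℕ × ℕ × ℕ := fun j s =>
      ⟨s.2.1, (Hstep (j+1) s.2.1 s.2.2.1 s.2.2.2).choose.2.1,
        (Hstep (j+1) s.2.1 s.2.2.1 s.2.2.2).choose.1,
        (Hstep (j+1) s.2.1 s.2.2.1 s.2.2.2).choose.2.2⟩
    let st : ℕ → ℕ × ℕ × ℕ × ℕ := fun j => Nat.rec st0 stf j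
    let k : ℕ → ℕ := fun j => (st j).1
    let nn : ℕ → ℕ := fun j => (st j).2.2.1
    let NN : ℕ → ℕ := fun j => (st j).2.2.2
    have hspec : ∀ j : ℕ, nn j < nn (j+1) ∧ NN j ≤ nn (j+1) ∧ k (j+1) < k (j+2) ∧
        NN j ≤ NN (j+1) ∧
        (lam - ep/8 < ∫ x, gg e r (k (j+1)) x ∂(μ (nn (j+1)))) ∧
        (∫ x, gg e r (k (j+2)) x ∂(μ (nn (j+1))) < tolC (j+1)) ∧
        (∀ m1, NN (j+1) ≤ m1 → ∀ m2, NN (j+1) ≤ m2 →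
          |∫ x, chi (k (j+1)) (k (j+2)) x ∂(μ m1) -
            ∫ x, chi (k (j+1)) (k (j+2)) x ∂(μ m2)| ≤ tolN (j+1)) := by
      intro j
      exact (Hstep (j+1) (st j).2.1 (st j).2.2.1 (st j).2.2.2).choose_spec
    have hspec0 : (0 : ℕ) < k 1 ∧
        (lam - ep/8 < ∫ x, gg e r (k 0) x ∂(μ (nn 0))) ∧
        (∫ x, gg e r (k 1) x ∂(μ (nn 0)) < tolC 0) ∧
        (∀ m1, NN 0 ≤ m1 → ∀ m2, NN 0 ≤ m2 →
          |∫ x, chi (k 0) (k 1) x ∂(μ m1) - ∫ x, chi (k 0) (k 1) x ∂(μ m2)| ≤ tolN 0) := by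
      obtain ⟨h1, h2, h3, h4, h5, h6, h7⟩ := (Hstep 0 0 0 0).choose_spec
      exact ⟨h3, h5, h6, h7⟩
    have hA : ∀ j, lam - ep/8 < ∫ x, gg e r (k j) x ∂(μ (nn j)) := by
      intro j
      cases j with
      | zero => exact hspec0.2.1
      | succ j => exact (hspec j).2.2.2.2.1
    have hC : ∀ j, ∫ x, gg e r (k (j+1)) x ∂(μ (nn j)) < tolC j := by
      intro j
      cases j with
      | zero => exact hspec0.2.2.1
      | succ j => exact (hspec j).2.2.2.2.2.1
    have hCau : ∀ j, ∀ m1, NN j ≤ m1 → ∀ m2, NN j ≤ m2 →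
        |∫ x, chi (k j) (k (j+1)) x ∂(μ m1) - ∫ x, chi (k j) (k (j+1)) x ∂(μ m2)|
          ≤ tolN j := by
      intro j
      cases j with
      | zero => exact hspec0.2.2.2
      | succ j => exact (hspec j).2.2.2.2.2.2
    have hkmono : StrictMono k := by
      apply strictMono_nat_of_lt_succ
      intro j
      cases j with
      | zero => exact hspec0.1
      | succ j => exact (hspec j).2.2.1
    have hnmono : StrictMono nn := strictMono_nat_of_lt_succ fun j => (hspec j).1
    have hNmono : Monotone NN := monotone_nat_of_le_succ fun j => (hspec j).2.2.2.1
    have hNn : ∀ j, NN j ≤ nn (j+1) := fun j => (hspec j).2.1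
    clear_value k nn NN st stf st0
    clear hspec hspec0
    -- limits of the shell functions
    choose Lchi hLchi using fun j => hconv _ (hchi_isBL (k j) (k (j+1)))
    have hint_nonneg : ∀ j m, 0 ≤ ∫ x, chi (k j) (k (j+1)) x ∂(μ m) := by
      intro j m
      haveI := hprob m
      exact integral_nonneg (fun x => hchi_nonneg _ _ x)
    have hLchi_nonneg : ∀ j, 0 ≤ Lchi j := fun j =>
      ge_of_tendsto (hLchi j) (Eventually.of_forall fun m => hint_nonneg j m)
    have herr : ∀ j, ∀ m, NN j ≤ m →
        |∫ x, chi (k j) (k (j+1)) x ∂(μ m) - Lchi j| ≤ tolN j := by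
      intro j m hm
      have ht : Tendsto
          (fun m2 => |∫ x, chi (k j) (k (j+1)) x ∂(μ m) -
            ∫ x, chi (k j) (k (j+1)) x ∂(μ m2)|) atTop
          (𝓝 |∫ x, chi (k j) (k (j+1)) x ∂(μ m) - Lchi j|) :=
        (tendsto_const_nhds.sub (hLchi j)).abs
      refine le_of_tendsto ht ?_
      filter_upwards [eventually_ge_atTop (NN j)] with m2 hm2
      exact hCau j m hm m2 hm2
    -- the test function
    set ff : S → ℝ := fun x => ⨆ t : ℕ, chi (k (2*t+1)) (k (2*t+2)) x with hff_def
    have hbddx : ∀ x : S, BddAbove (Set.range fun t : ℕ => chi (k (2*t+1)) (k (2*t+2)) x) :=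
      fun x => ⟨1, by rintro y ⟨t, rfl⟩; exact hchi_le_one _ _ x⟩
    have hff_lip : LipschitzWith M.toNNReal ff :=
      lipschitzWith_iSup (fun t => hchi_lip _ _) (fun t x => hchi_le_one _ _ x)
    have hff_nonneg : ∀ x, 0 ≤ ff x := fun x =>
      le_trans (hchi_nonneg (k 1) (k 2) x) (le_ciSup (hbddx x) 0)
    have hff_le_one : ∀ x, ff x ≤ 1 := fun x => ciSup_le fun t => hchi_le_one _ _ x
    have hff_isBL : IsBL ff :=
      ⟨⟨1, fun x => abs_le.2 ⟨by linarith [hff_nonneg x], hff_le_one x⟩⟩, ⟨_, hff_lip⟩⟩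
    have hff_int : ∀ m, Integrable ff (μ m) := by
      intro m
      haveI := hprob m
      exact integrable_bdd_cont (μ m) hff_lip.continuous
        (fun x => abs_le.2 ⟨by linarith [hff_nonneg x], hff_le_one x⟩)
    obtain ⟨Lff, hLff⟩ := hconv ff hff_isBL
    -- disjointness of the shells
    have hdisj : ∀ (x : S) (t t' : ℕ), t < t' → 0 < chi (k (2*t'+1)) (k (2*t'+2)) x →
        chi (k (2*t+1)) (k (2*t+2)) x = 0 := by
      intro x t t' htt hpos
      have hA' : 0 < cl ((gg e r (k (2*t'+1)) x - bb) / (cc - bb)) :=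
        lt_of_lt_of_le hpos (min_le_left _ _)
      have hgb : bb < gg e r (k (2*t'+1)) x := ramp1_pos hbc hA'
      have hk_le : k (2*t+2) ≤ k (2*t'+1) := hkmono.monotone (show 2*t+2 ≤ 2*t'+1 by omega)
      have hgb2 : bb ≤ gg e r (k (2*t+2)) x :=
        le_trans hgb.le (gg_anti hr hk_le)
      have hzero : cl ((bb - gg e r (k (2*t+2)) x) / (bb - aa)) = 0 :=
        ramp2_eq_zero hab hgb2
      refine le_antisymm ?_ (hchi_nonneg _ _ x)
      calc chi (k (2*t+1)) (k (2*t+2)) x ≤ _ := min_le_right _ _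
        _ = 0 := hzero
    -- pointwise: finite sums of shells are below ff
    have hPW4 : ∀ (x : S) (R : ℕ),
        ∑ i ∈ Finset.range R, chi (k (2*i+1)) (k (2*i+2)) x ≤ ff x := by
      intro x R
      exact sum_le_iSup (fun t => hchi_nonneg _ _ x) (fun t => hchi_le_one _ _ x)
        (fun t t' h hp => hdisj x t t' h hp) R
    -- pointwise : ff is below a finite sum plus a tail bound
    have hPW5 : ∀ (x : S) (R : ℕ),
        ff x ≤ (∑ i ∈ Finset.range (R+1), chi (k (2*i+1)) (k (2*i+2)) x) +
          gg e r (k (2*R+3)) x / bb := by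
      intro x R
      refine ciSup_le fun t => ?_
      rcases le_or_gt t R with htR | htR
      · have hmem : t ∈ Finset.range (R+1) := Finset.mem_range.2 (by omega)
        have h1 : chi (k (2*t+1)) (k (2*t+2)) x ≤
            ∑ i ∈ Finset.range (R+1), chi (k (2*i+1)) (k (2*i+2)) x :=
          Finset.single_le_sum (f := fun i => chi (k (2*i+1)) (k (2*i+2)) x)
            (fun i _ => hchi_nonneg _ _ x) hmem
        have h2 : 0 ≤ gg e r (k (2*R+3)) x / bb :=
          div_nonneg (gg_nonneg hr) hbb_pos.le
        linarith
      · rcases le_or_gt (chi (k (2*t+1)) (k (2*t+2)) x) 0 with hle | hpos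
        · have h1 : (0:ℝ) ≤ ∑ i ∈ Finset.range (R+1), chi (k (2*i+1)) (k (2*i+2)) x :=
            Finset.sum_nonneg (fun i _ => hchi_nonneg _ _ x)
          have h2 : 0 ≤ gg e r (k (2*R+3)) x / bb :=
            div_nonneg (gg_nonneg hr) hbb_pos.le
          linarith
        · have hA' : 0 < cl ((gg e r (k (2*t+1)) x - bb) / (cc - bb)) :=
            lt_of_lt_of_le hpos (min_le_left _ _)
          have hgb : bb < gg e r (k (2*t+1)) x := ramp1_pos hbc hA'
          have hk_le : k (2*R+3) ≤ k (2*t+1) := hkmono.monotone (show 2*R+3 ≤ 2*t+1 by omega)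
          have hgb2 : bb ≤ gg e r (k (2*R+3)) x := le_trans hgb.le (gg_anti hr hk_le)
          have h3 : (1:ℝ) ≤ gg e r (k (2*R+3)) x / bb := (one_le_div hbb_pos).2 hgb2
          have h1 : (0:ℝ) ≤ ∑ i ∈ Finset.range (R+1), chi (k (2*i+1)) (k (2*i+2)) x :=
            Finset.sum_nonneg (fun i _ => hchi_nonneg _ _ x)
          have h4 : chi (k (2*t+1)) (k (2*t+2)) x ≤ 1 := hchi_le_one _ _ x
          linarith
    -- pointwise lower bound for a single shell
    have hPW1 : ∀ (j : ℕ) (x : S), gg e r (k j) x - cc - gg e r (k (j+1)) x / aa ≤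
        chi (k j) (k (j+1)) x := by
      intro j x
      apply min_ge_aux
      · exact ramp1_ge hbc hc0 gg_le_one
      · exact ramp2_ge haa_pos hab (gg_nonneg hr)
      · exact gg_le_one
      · exact hc0
      · exact div_nonneg (gg_nonneg hr) haa_pos.le
    -- integral lower bound for the diagonal shell
    have hpow_le_one : ∀ j : ℕ, ((1:ℝ)/2)^j ≤ 1 := fun j =>
      pow_le_one₀ (by norm_num) (by norm_num)
    have hdiag : ∀ j, ep/3 ≤ ∫ x, chi (k j) (k (j+1)) x ∂(μ (nn j)) := by
      intro j
      haveI := hprob (nn j)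
      have hint1 : Integrable (fun x => gg e r (k j) x - cc - gg e r (k (j+1)) x / aa)
          (μ (nn j)) := by
        exact ((hgg_int (k j) (nn j)).sub (integrable_const cc)).sub
          ((hgg_int (k (j+1)) (nn j)).div_const aa)
      have hmono : ∫ x, (gg e r (k j) x - cc - gg e r (k (j+1)) x / aa) ∂(μ (nn j)) ≤
          ∫ x, chi (k j) (k (j+1)) x ∂(μ (nn j)) :=
        integral_mono hint1 (hchi_int (k j) (k (j+1)) (nn j)) (fun x => hPW1 j x)
      have heq : ∫ x, (gg e r (k j) x - cc - gg e r (k (j+1)) x / aa) ∂(μ (nn j)) =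
          (∫ x, gg e r (k j) x ∂(μ (nn j))) - cc -
            (∫ x, gg e r (k (j+1)) x ∂(μ (nn j))) / aa := by
        rw [integral_sub (by exact (hgg_int (k j) (nn j)).sub (integrable_const cc))
          (by exact (hgg_int (k (j+1)) (nn j)).div_const aa),
          integral_sub (hgg_int (k j) (nn j)) (integrable_const cc),
          integral_const]
        simp [integral_div]
      rw [heq] at hmono
      have h1 := hA j
      have h2 := hC j
      have h3 : (∫ x, gg e r (k (j+1)) x ∂(μ (nn j))) / aa ≤ tolC j / aa := by
        gcongr
      have h4 : tolC j / aa = ep * (1/2)^j / 100 := by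
        simp only [htolC_def]
        field_simp
      have h6 : ep * (1/2)^j / 100 ≤ ep / 100 := by
        have := hpow_le_one j
        nlinarith
      rw [h4] at h3
      linarith
    -- bound on the sums of tolerances
    have htolN_sum : ∀ R : ℕ, ∑ i ∈ Finset.range R, tolN (2*i+1) ≤ ep / 100 := by
      intro R
      have h1 : ∀ i : ℕ, tolN (2*i+1) ≤ ep/100 * ((1:ℝ)/2)^(i+1) := by
        intro i
        simp only [htolN_def]
        have h2 : ((1:ℝ)/2)^(2*i+1) ≤ ((1:ℝ)/2)^(i+1) :=
          pow_le_pow_of_le_one (by norm_num) (by norm_num) (by omega)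
        nlinarith
      calc ∑ i ∈ Finset.range R, tolN (2*i+1)
          ≤ ∑ i ∈ Finset.range R, ep/100 * ((1:ℝ)/2)^(i+1) :=
            Finset.sum_le_sum (fun i _ => h1 i)
        _ = ep/100 * (1/2) * ∑ i ∈ Finset.range R, ((1:ℝ)/2)^i := by
            rw [Finset.mul_sum]
            exact Finset.sum_congr rfl (fun i _ => by rw [pow_succ]; ring)
        _ ≤ ep/100 * (1/2) * 2 := by
            have := sum_geometric_two_le R
            nlinarith
        _ = ep/100 := by ring
    set T : ℕ → ℝ := fun R => ∑ i ∈ Finset.range R, Lchi (2*i+1) with hT_def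
    -- lower estimate along odd indices
    have hE1 : ∀ R : ℕ, T R - ep/100 + ep/3 ≤ ∫ x, ff x ∂(μ (nn (2*R+1))) := by
      intro R
      haveI := hprob (nn (2*R+1))
      have hintsum : Integrable
          (fun x => ∑ i ∈ Finset.range (R+1), chi (k (2*i+1)) (k (2*i+2)) x)
          (μ (nn (2*R+1))) :=
        integrable_finset_sum _ (fun i _ => hchi_int _ _ _)
      have h1 : ∫ x, (∑ i ∈ Finset.range (R+1), chi (k (2*i+1)) (k (2*i+2)) x)
            ∂(μ (nn (2*R+1))) ≤ ∫ x, ff x ∂(μ (nn (2*R+1))) :=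
        integral_mono hintsum (hff_int _) (fun x => hPW4 x (R+1))
      rw [integral_finset_sum _ (fun i _ => hchi_int _ _ _), Finset.sum_range_succ] at h1
      have h2 : ∀ i, i < R → Lchi (2*i+1) - tolN (2*i+1) ≤
          ∫ x, chi (k (2*i+1)) (k (2*i+2)) x ∂(μ (nn (2*R+1))) := by
        intro i hi
        have hNle : NN (2*i+1) ≤ nn (2*R+1) :=
          le_trans (hNmono (by omega : 2*i+1 ≤ 2*R)) (hNn (2*R))
        have h3 := herr (2*i+1) (nn (2*R+1)) hNle
        have h4 : (2*i+1)+1 = 2*i+2 := by omega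
        rw [h4] at h3
        have h5 := (abs_le.1 h3).1
        linarith
      have h3 : T R - ep/100 ≤
          ∑ i ∈ Finset.range R, ∫ x, chi (k (2*i+1)) (k (2*i+2)) x ∂(μ (nn (2*R+1))) := by
        have h4 := Finset.sum_le_sum (fun i hi => h2 i (Finset.mem_range.1 hi))
        rw [Finset.sum_sub_distrib] at h4
        have h5 := htolN_sum R
        simp only [hT_def]
        linarith
      have h6 := hdiag (2*R+1)
      have h7 : (2*R+1)+1 = 2*R+2 := by omega
      rw [h7] at h6
      linarith
    -- upper estimate along even indices
    have hE2 : ∀ R : ℕ, ∫ x, ff x ∂(μ (nn (2*R+2))) ≤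
        T (R+1) + ep/100 + tolC (2*R+2) / bb := by
      intro R
      haveI := hprob (nn (2*R+2))
      have hintsum : Integrable
          (fun x => ∑ i ∈ Finset.range (R+1), chi (k (2*i+1)) (k (2*i+2)) x)
          (μ (nn (2*R+2))) :=
        integrable_finset_sum _ (fun i _ => hchi_int _ _ _)
      have hint2 : Integrable
          (fun x => (∑ i ∈ Finset.range (R+1), chi (k (2*i+1)) (k (2*i+2)) x) +
            gg e r (k (2*R+3)) x / bb) (μ (nn (2*R+2))) := by
        exact hintsum.add ((hgg_int _ _).div_const bb)
      have h1 : ∫ x, ff x ∂(μ (nn (2*R+2))) ≤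
          ∫ x, ((∑ i ∈ Finset.range (R+1), chi (k (2*i+1)) (k (2*i+2)) x) +
            gg e r (k (2*R+3)) x / bb) ∂(μ (nn (2*R+2))) :=
        integral_mono (hff_int _) hint2 (fun x => hPW5 x R)
      rw [integral_add hintsum ((hgg_int _ _).div_const bb),
        integral_finset_sum _ (fun i _ => hchi_int _ _ _), integral_div] at h1
      have h2 : ∀ i, i < R+1 → ∫ x, chi (k (2*i+1)) (k (2*i+2)) x ∂(μ (nn (2*R+2))) ≤
          Lchi (2*i+1) + tolN (2*i+1) := by
        intro i hi
        have hNle : NN (2*i+1) ≤ nn (2*R+2) :=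
          le_trans (hNmono (by omega : 2*i+1 ≤ 2*R+1)) (hNn (2*R+1))
        have h3 := herr (2*i+1) (nn (2*R+2)) hNle
        have h4 : (2*i+1)+1 = 2*i+2 := by omega
        rw [h4] at h3
        have h5 := (abs_le.1 h3).2
        linarith
      have h3 : ∑ i ∈ Finset.range (R+1), ∫ x, chi (k (2*i+1)) (k (2*i+2)) x
            ∂(μ (nn (2*R+2))) ≤ T (R+1) + ep/100 := by
        have h4 := Finset.sum_le_sum (fun i hi => h2 i (Finset.mem_range.1 hi))
        rw [Finset.sum_add_distrib] at h4
        have h5 := htolN_sum (R+1)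
        simp only [hT_def]
        linarith
      have h6 := hC (2*R+2)
      have h7 : (2*R+2)+1 = 2*R+3 := by omega
      rw [h7] at h6
      have h8 : (∫ x, gg e r (k (2*R+3)) x ∂(μ (nn (2*R+2)))) / bb ≤ tolC (2*R+2) / bb := by
        gcongr
      linarith
    -- properties of the partial sums T
    have hTmono : Monotone T := by
      intro R1 R2 h
      simp only [hT_def]
      apply Finset.sum_le_sum_of_subset_of_nonneg (Finset.range_subset_range.2 h)
      intro i _ _
      exact hLchi_nonneg _
    have hLchi' : ∀ i : ℕ, Tendsto (fun m => ∫ x, chi (k (2*i+1)) (k (2*i+2)) x ∂(μ m))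
        atTop (𝓝 (Lchi (2*i+1))) := by
      intro i
      have h := hLchi (2*i+1)
      have h4 : (2*i+1)+1 = 2*i+2 := by omega
      rwa [h4] at h
    have hTbdd : ∀ R, T R ≤ 1 := by
      intro R
      have hten : Tendsto (fun m => ∑ i ∈ Finset.range R,
          ∫ x, chi (k (2*i+1)) (k (2*i+2)) x ∂(μ m)) atTop (𝓝 (T R)) := by
        simp only [hT_def]
        exact tendsto_finset_sum _ (fun i _ => hLchi' i)
      refine le_of_tendsto hten (Eventually.of_forall fun m => ?_)
      haveI := hprob m
      have hintsum : Integrable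
          (fun x => ∑ i ∈ Finset.range R, chi (k (2*i+1)) (k (2*i+2)) x) (μ m) :=
        integrable_finset_sum _ (fun i _ => hchi_int _ _ _)
      have h1 : ∫ x, (∑ i ∈ Finset.range R, chi (k (2*i+1)) (k (2*i+2)) x) ∂(μ m) ≤
          ∫ x, (1:ℝ) ∂(μ m) := by
        apply integral_mono hintsum (integrable_const 1)
        intro x
        exact le_trans (hPW4 x R) (hff_le_one x)
      rw [integral_finset_sum _ (fun i _ => hchi_int _ _ _), integral_const] at h1
      simpa using h1
    have hTbdd' : BddAbove (Set.range T) := ⟨1, by rintro y ⟨R, rfl⟩; exact hTbdd R⟩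
    set TT := ⨆ R, T R with hTT_def
    have hTten : Tendsto T atTop (𝓝 TT) := tendsto_atTop_ciSup hTmono hTbdd'
    have hodd : StrictMono (fun R : ℕ => 2*R+1) :=
      strictMono_nat_of_lt_succ (fun R => by omega)
    have heven : StrictMono (fun R : ℕ => 2*R+2) :=
      strictMono_nat_of_lt_succ (fun R => by omega)
    have hsub1 : Tendsto (fun R => ∫ x, ff x ∂(μ (nn (2*R+1)))) atTop (𝓝 Lff) :=
      hLff.comp ((hnmono.comp hodd).tendsto_atTop)
    have hsub2 : Tendsto (fun R => ∫ x, ff x ∂(μ (nn (2*R+2)))) atTop (𝓝 Lff) :=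
      hLff.comp ((hnmono.comp heven).tendsto_atTop)
    have hlow : TT - ep/100 + ep/3 ≤ Lff := by
      refine le_of_tendsto_of_tendsto'
        (((hTten.sub tendsto_const_nhds).add tendsto_const_nhds)) hsub1 hE1
    have hgeo : Tendsto (fun R : ℕ => tolC (2*R+2) / bb) atTop (𝓝 0) := by
      have h0 : Tendsto (fun R : ℕ => ((1:ℝ)/2)^R) atTop (𝓝 0) :=
        tendsto_pow_atTop_nhds_zero_of_lt_one (by norm_num) (by norm_num)
      have h1 : Tendsto (fun R : ℕ => ((1:ℝ)/2)^(2*R+2)) atTop (𝓝 0) :=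
        h0.comp (heven.tendsto_atTop)
      have h2 : (fun R : ℕ => tolC (2*R+2)/bb) =
          fun R : ℕ => (aa*ep/100/bb) * ((1:ℝ)/2)^(2*R+2) := by
        funext R
        simp only [htolC_def]
        field_simp
      rw [h2]
      simpa using h1.const_mul (aa*ep/100/bb)
    have hup : Lff ≤ TT + ep/100 := by
      have hten2 : Tendsto (fun R => T (R+1) + ep/100 + tolC (2*R+2)/bb) atTop
          (𝓝 (TT + ep/100 + 0)) :=
        ((hTten.comp (tendsto_add_atTop_nat 1)).add tendsto_const_nhds).add hgeo
      have h1 := le_of_tendsto_of_tendsto' hsub2 hten2 hE2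
      simpa using h1
    linarith
  -- Step B : conclude
  intro η hη
  obtain ⟨m₀, hm₀⟩ := stepA η hη
  have h1 : ∀ᶠ nnn in atTop, ∫ x, gg e r m₀ x ∂(μ nnn) < η :=
    (hLG m₀).eventually (eventually_lt_nhds hm₀)
  obtain ⟨N, hN⟩ := eventually_atTop.1 h1
  have h2 : ∀ nnn : ℕ, ∃ m : ℕ, ∀ m', m ≤ m' → ∫ x, gg e r m' x ∂(μ nnn) < η := by
    intro nnn
    haveI := hprob nnn
    exact eventually_atTop.1
      ((tendsto_integral_gg hr he (μ nnn)).eventually (eventually_lt_nhds hη))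
  choose mf hmf using h2
  refine ⟨max m₀ ((Finset.range N).sup mf), ?_⟩
  intro nnn
  rcases lt_or_ge nnn N with h | h
  · exact hmf nnn _ (le_trans (Finset.le_sup (Finset.mem_range.2 h)) (le_max_right _ _))
  · haveI := hprob nnn
    have hmono : ∫ x, gg e r (max m₀ ((Finset.range N).sup mf)) x ∂(μ nnn) ≤
        ∫ x, gg e r m₀ x ∂(μ nnn) :=
      integral_mono (hgg_int _ _) (hgg_int _ _) (fun x => gg_anti hr (le_max_left _ _))
    exact lt_of_le_of_lt hmono (hN nnn h)


end Key

end TightnessBLAux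

/-- If `(μ_n)` is a sequence of Borel probability measures on a complete separable metric space
such that `∫ f dμ_n` converges for every bounded Lipschitz `f`, then the family `{μ_n : n}` is
uniformly tight: for every `ε > 0` there is a compact set `K ⊆ S` with `μ_n(S∖K) < ε` for all
`n`. -/
theorem tightness_of_BL_weak_convergence {S : Type*} [MetricSpace S] [CompleteSpace S]
    [TopologicalSpace.SeparableSpace S] [MeasurableSpace S] [BorelSpace S]
    (μ : ℕ → Measure S) (hprob : ∀ n, IsProbabilityMeasure (μ n))
    (hconv : ∀ f : S → ℝ, IsBL f →
      ∃ l : ℝ, Tendsto (fun n => ∫ x, f x ∂(μ n)) atTop (𝓝 l)) :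
    ∀ ε : ℝ, 0 < ε → ∃ K : Set S, IsCompact K ∧ ∀ n, μ n Kᶜ < ENNReal.ofReal ε := by
  intro ε hε
  haveI hne : Nonempty S := by
    by_contra h
    rw [not_nonempty_iff] at h
    have h1 := (hprob 0).measure_univ
    have h2 : (Set.univ : Set S) = ∅ := Set.univ_eq_empty_iff.2 h
    rw [h2, measure_empty] at h1
    exact zero_ne_one h1
  set e := TopologicalSpace.denseSeq S with he_def
  have he : DenseRange e := TopologicalSpace.denseRange_denseSeq S
  have hrpos : ∀ q : ℕ, (0:ℝ) < (1/2)^q := fun q => by positivity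
  have h1 : ∀ q : ℕ, ∃ m : ℕ, ∀ n,
      ∫ x, TightnessBLAux.gg e ((1/2)^q) m x ∂(μ n) < ε/4 * (1/2)^q := by
    intro q
    exact TightnessBLAux.key_claim μ hprob hconv e he (hrpos q) _ (by positivity)
  choose mq hmq using h1
  set C : ℕ → Set S := fun q =>
    {x | Metric.infDist x (TightnessBLAux.UU e ((1/2)^q) (mq q)) ≤ (1/2)^q} with hC_def
  refine ⟨⋂ q, C q, ?_, ?_⟩
  · have hclosed : IsClosed (⋂ q, C q) :=
      isClosed_iInter (fun q =>
        isClosed_le (Metric.continuous_infDist_pt _) continuous_const)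
    apply TotallyBounded.isCompact_of_isClosed ?_ hclosed
    rw [Metric.totallyBounded_iff]
    intro δ hδ
    obtain ⟨q, hq⟩ := exists_pow_lt_of_lt_one (show (0:ℝ) < δ/3 by linarith)
      (by norm_num : (1:ℝ)/2 < 1)
    refine ⟨e '' {i | i ≤ mq q}, (Set.finite_Iic (mq q)).image e, ?_⟩
    intro x hx
    have hx' : x ∈ C q := Set.mem_iInter.1 hx q
    have hx2 : Metric.infDist x (TightnessBLAux.UU e ((1/2)^q) (mq q)) < 2*(1/2)^q :=
      lt_of_le_of_lt hx' (by linarith [hrpos q])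
    obtain ⟨y, hy, hxy⟩ := (Metric.infDist_lt_iff (TightnessBLAux.UU_nonempty (hrpos q))).1 hx2
    rw [TightnessBLAux.UU] at hy
    simp only [Set.mem_iUnion] at hy
    obtain ⟨i, him, hyb⟩ := hy
    rw [Metric.mem_ball] at hyb
    refine Set.mem_biUnion (Set.mem_image_of_mem e him) ?_
    rw [Metric.mem_ball]
    calc dist x (e i) ≤ dist x y + dist y (e i) := dist_triangle x y (e i)
      _ < 2*(1/2)^q + (1/2)^q := by linarith
      _ = 3 * (1/2)^q := by ring
      _ < 3 * (δ/3) := by linarith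
      _ = δ := by ring
  · intro n
    haveI := hprob n
    have h2 : ∀ q, μ n ((C q)ᶜ) ≤ ENNReal.ofReal (ε/4 * (1/2)^q) := by
      intro q
      have hsub2 : (C q)ᶜ ⊆ {x | 1 ≤ TightnessBLAux.gg e ((1/2)^q) (mq q) x} := by
        intro x hx
        simp only [hC_def, Set.mem_compl_iff, Set.mem_setOf_eq, not_le] at hx
        have h3 := TightnessBLAux.gg_eq_one (hrpos q) hx.le
        simp only [Set.mem_setOf_eq, h3, le_refl]
      have hmarkov := mul_meas_ge_le_integral_of_nonneg (μ := μ n)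
        (f := TightnessBLAux.gg e ((1/2)^q) (mq q))
        (Filter.Eventually.of_forall fun x => TightnessBLAux.gg_nonneg (hrpos q))
        (TightnessBLAux.gg_integrable (hrpos q) (μ n)) 1
      rw [one_mul] at hmarkov
      have h3 : (μ n {x | 1 ≤ TightnessBLAux.gg e ((1/2)^q) (mq q) x}).toReal ≤ ε/4 * (1/2)^q :=
        le_of_lt (lt_of_le_of_lt hmarkov (hmq q n))
      calc μ n ((C q)ᶜ) ≤ μ n {x | 1 ≤ TightnessBLAux.gg e ((1/2)^q) (mq q) x} := measure_mono hsub2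
        _ = ENNReal.ofReal (μ n {x | 1 ≤ TightnessBLAux.gg e ((1/2)^q) (mq q) x}).toReal :=
          (ENNReal.ofReal_toReal (measure_ne_top _ _)).symm
        _ ≤ ENNReal.ofReal (ε/4 * (1/2)^q) := ENNReal.ofReal_le_ofReal h3
    have hsummable : Summable (fun q : ℕ => ε/4 * ((1:ℝ)/2)^q) :=
      (summable_geometric_of_lt_one (by norm_num) (by norm_num)).mul_left _
    calc μ n ((⋂ q, C q)ᶜ) = μ n (⋃ q, (C q)ᶜ) := by rw [Set.compl_iInter]
      _ ≤ ∑' q, μ n ((C q)ᶜ) := measure_iUnion_le _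
      _ ≤ ∑' q, ENNReal.ofReal (ε/4 * (1/2)^q) := ENNReal.tsum_le_tsum h2
      _ = ENNReal.ofReal (∑' q : ℕ, ε/4 * ((1:ℝ)/2)^q) :=
          (ENNReal.ofReal_tsum_of_nonneg (fun q => by positivity) hsummable).symm
      _ = ENNReal.ofReal (ε/2) := by
          rw [tsum_mul_left, tsum_geometric_of_lt_one (by norm_num) (by norm_num)]
          norm_num
          rw [show ε/4*2 = ε/2 by ring]
      _ < ENNReal.ofReal ε := by
          rw [ENNReal.ofReal_lt_ofReal_iff hε]
          linarith
end

section
/- Let S = [0,1] with the Euclidean metric and let μ_n be the finite signed Borel measure on [0,1] with density x ↦ n·sin(2πnx) with respect to Lebesgue measure. Then the sequence of total variation norms ‖μ_n‖_TV is unbounded, and the sequence of dual bounded Lipschitz norms ‖μ_n‖*_BL does not converge to 0 as n → ∞; in particular, for each n there exists g_n : [0,1] → ℝ with Lipschitz constant 1 and ‖g_n‖_∞ ≤ 1/(4n) such that ∫_0^1 g_n(x)·n·sin(2πnx) dx = 1/π². -/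
open MeasureTheory Filter Topology intervalIntegral

/-- The pairing of the signed measure on `[0,1]` with density `x ↦ n·sin(2πnx)` (with respect to
Lebesgue measure) with a function `g`. -/
noncomputable def pair01 (n : ℕ) (g : ℝ → ℝ) : ℝ :=
  ∫ x in (0:ℝ)..1, g x * ((n : ℝ) * Real.sin (2 * Real.pi * (n : ℝ) * x))

/-- The dual bounded Lipschitz norm `‖μ_n‖*_BL` of that measure:
the supremum of `|⟨μ_n, g⟩|` over bounded Lipschitz `g : [0,1] → ℝ` with
`‖g‖_∞ + |g|_L ≤ 1`. -/
noncomputable def blStar01 (n : ℕ) : ℝ :=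
  sSup {r : ℝ | ∃ (g : ℝ → ℝ) (C : ℝ) (K : NNReal),
    (∀ x ∈ Set.Icc (0:ℝ) 1, |g x| ≤ C) ∧ LipschitzOnWith K g (Set.Icc (0:ℝ) 1) ∧
    C + (K : ℝ) ≤ 1 ∧ r = |pair01 n g|}

open Real

/-!
The total variation of `μ_n` is at least `∫₀¹ n sin²(2πnx) dx = n/2`. For the bounded Lipschitz
norm, pair `μ_n` with `g_n x = T(nx)/n`, where `T` is the 1-periodic triangle wave of slope `±1`
and height `1/4` in phase with `sin(2πx)`: `g_n` is 1-Lipschitz with `‖g_n‖_∞ = 1/(4n)`, yet the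
substitution `u = nx` and periodicity turn `⟨μ_n, g_n⟩` into the `n`-independent integral
`∫₀¹ T(u) sin(2πu) du = 1/π²`. Halving `g_n` makes it admissible for `‖·‖*_BL`, which is
therefore at least `1/(2π²)`.
-/

theorem Function.Periodic.intervalIntegral_comp_natCast_mul {E : Type*} [NormedAddCommGroup E]
    [NormedSpace ℝ E] {f : ℝ → E} {T : ℝ} (hf : Function.Periodic f T)
    (hint : ∀ a b, IntervalIntegrable f volume a b) {n : ℕ} (hn : n ≠ 0) :
    ∫ x in 0..T, f (n * x) = ∫ x in 0..T, f x := by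
  have hn' : (n : ℝ) ≠ 0 := Nat.cast_ne_zero.mpr hn
  have hmul := hf.intervalIntegral_add_zsmul_eq n 0 hint
  simp only [zero_add, natCast_zsmul, nsmul_eq_mul] at hmul
  rw [integral_comp_mul_left f hn', mul_zero, hmul, ← Nat.cast_smul_eq_nsmul ℝ, smul_smul,
    inv_mul_cancel₀ hn', one_smul]

/-- `‖x‖` on `ℝ/ℤ` is the distance from `x` to the nearest integer, so this is the triangle
wave vanishing at `0` and `1/2` with peak `1/4` at `1/4`. -/
noncomputable def triangleWave (u : ℝ) : ℝ := 1 / 4 - ‖((u - 1 / 4 : ℝ) : UnitAddCircle)‖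

lemma lipschitzWith_triangleWave : LipschitzWith 1 triangleWave := by
  refine LipschitzWith.of_dist_le_mul fun a b => ?_
  rw [Real.dist_eq, triangleWave, triangleWave, sub_sub_sub_cancel_left, abs_sub_comm,
    NNReal.coe_one, one_mul]
  refine (abs_norm_sub_norm_le _ _).trans ?_
  rw [← AddCircle.coe_sub, sub_sub_sub_cancel_right]
  exact QuotientAddGroup.norm_mk_le_norm

lemma abs_triangleWave_le (u : ℝ) : |triangleWave u| ≤ 1 / 4 := by
  have h := AddCircle.norm_le_half_period 1 (x := ((u - 1 / 4 : ℝ) : UnitAddCircle)) one_ne_zero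
  rw [triangleWave, abs_le]
  constructor <;> linarith [norm_nonneg ((u - 1 / 4 : ℝ) : UnitAddCircle)]

lemma triangleWave_periodic : Function.Periodic triangleWave 1 := by
  intro u
  simp [triangleWave, add_sub_right_comm u 1]

lemma triangleWave_eq_of_mem_Icc {u : ℝ} (hu : u ∈ Set.Icc (-1 / 4 : ℝ) (3 / 4)) :
    triangleWave u = 1 / 4 - |u - 1 / 4| := by
  rw [triangleWave, (AddCircle.norm_coe_eq_abs_iff 1 one_ne_zero).mpr]
  rw [abs_one, abs_le]; constructor <;> linarith [hu.1, hu.2]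

lemma integral_affine_mul_sin (a b s t : ℝ) :
    ∫ u in s..t, (a + b * u) * sin (2 * π * u) =
      (b * sin (2 * π * t) / (2 * π) ^ 2 - (a + b * t) * cos (2 * π * t) / (2 * π)) -
      (b * sin (2 * π * s) / (2 * π) ^ 2 - (a + b * s) * cos (2 * π * s) / (2 * π)) := by
  refine integral_eq_sub_of_hasDerivAt
    (f := fun u => b * sin (2 * π * u) / (2 * π) ^ 2 - (a + b * u) * cos (2 * π * u) / (2 * π))
    (fun u _ => ?_)
    ((by fun_prop : Continuous fun u => (a + b * u) * sin (2 * π * u)).intervalIntegrable s t)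
  have h2π : HasDerivAt (fun u => 2 * π * u) (2 * π) u := by
    simpa using (hasDerivAt_id u).const_mul (2 * π)
  have := ((h2π.sin.const_mul b).div_const ((2 * π) ^ 2)).sub
    ((((hasDerivAt_id u).const_mul b).const_add a).mul h2π.cos |>.div_const (2 * π))
  refine this.congr_deriv ?_
  simp only [id]
  field_simp
  ring

lemma continuous_triangleWave_mul_sin : Continuous fun u => triangleWave u * sin (2 * π * u) :=
  lipschitzWith_triangleWave.continuous.mul (by fun_prop)

lemma triangleWave_mul_sin_periodic :
    Function.Periodic (fun u => triangleWave u * sin (2 * π * u)) 1 := by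
  intro u
  simp only [triangleWave_periodic u, mul_add, mul_one, sin_add_two_pi]

lemma integral_triangleWave_mul_sin :
    ∫ u in 0..1, triangleWave u * sin (2 * π * u) = 1 / π ^ 2 := by
  have hint := continuous_triangleWave_mul_sin.intervalIntegrable (μ := volume)
  have hpiece : ∀ a b s t : ℝ, s ≤ t →
      (∀ u ∈ Set.Icc s t, triangleWave u = a + b * u) →
      ∫ u in s..t, triangleWave u * sin (2 * π * u) =
        ∫ u in s..t, (a + b * u) * sin (2 * π * u) :=
    fun a b s t hst h => integral_congr fun u hu => by
      rw [Set.uIcc_of_le hst] at hu; simp only [h u hu]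
  have hrise : ∀ u ∈ Set.Icc (-1 / 4 : ℝ) (1 / 4), triangleWave u = 0 + 1 * u :=
    fun u hu => by
      rw [triangleWave_eq_of_mem_Icc ⟨hu.1, by linarith [hu.2]⟩,
        abs_of_nonpos (by linarith [hu.2])]
      ring
  have hfall : ∀ u ∈ Set.Icc (1 / 4 : ℝ) (3 / 4), triangleWave u = 1 / 2 + -1 * u :=
    fun u hu => by
      rw [triangleWave_eq_of_mem_Icc ⟨by linarith [hu.1], hu.2⟩,
        abs_of_nonneg (by linarith [hu.1])]
      ring
  calc ∫ u in 0..1, triangleWave u * sin (2 * π * u)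
      = ∫ u in (-1 / 4)..(-1 / 4 + 1), triangleWave u * sin (2 * π * u) := by
        simpa using triangleWave_mul_sin_periodic.intervalIntegral_add_eq 0 (-1 / 4)
    _ = (∫ u in (-1 / 4)..(1 / 4), (0 + 1 * u) * sin (2 * π * u)) +
          ∫ u in (1 / 4)..(3 / 4), (1 / 2 + -1 * u) * sin (2 * π * u) := by
        rw [← hpiece _ _ _ _ (by norm_num) hrise, ← hpiece _ _ _ _ (by norm_num) hfall,
          integral_add_adjacent_intervals (hint _ _) (hint _ _)]
        norm_num
    _ = 1 / π ^ 2 := by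
        rw [integral_affine_mul_sin, integral_affine_mul_sin,
          show 2 * π * (-1 / 4) = -(π / 2) by ring, show 2 * π * (1 / 4) = π / 2 by ring,
          show 2 * π * (3 / 4) = π / 2 + π by ring]
        simp only [sin_neg, cos_neg, sin_add_pi, cos_add_pi, sin_pi_div_two, cos_pi_div_two]
        field_simp
        ring

lemma lipschitzWith_const_mul_triangleWave_mul (c a : ℝ) :
    LipschitzWith (‖c‖₊ * ‖a‖₊) fun x => c * triangleWave (a * x) := by
  have h := (lipschitzWith_smul c).comp (lipschitzWith_triangleWave.comp (lipschitzWith_smul a))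
  rw [one_mul] at h
  exact h

lemma abs_const_mul_triangleWave_le (c u : ℝ) : |c * triangleWave u| ≤ |c| / 4 := by
  rw [abs_mul]
  linarith [mul_le_mul_of_nonneg_left (abs_triangleWave_le u) (abs_nonneg c)]

lemma pair01_const_mul_triangleWave {n : ℕ} (hn : n ≠ 0) (c : ℝ) :
    pair01 n (fun x => c * triangleWave (n * x)) = c * n / π ^ 2 := by
  have hint := continuous_triangleWave_mul_sin.intervalIntegrable (μ := volume)
  calc pair01 n (fun x => c * triangleWave (n * x))
      = ∫ x in 0..1, c * n * (triangleWave (n * x) * sin (2 * π * (n * x))) := by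
        unfold pair01
        exact integral_congr fun x _ => by ring_nf
    _ = c * n / π ^ 2 := by
        rw [intervalIntegral.integral_const_mul,
          triangleWave_mul_sin_periodic.intervalIntegral_comp_natCast_mul hint hn,
          integral_triangleWave_mul_sin, mul_one_div]

lemma abs_pair01_le {n : ℕ} {g : ℝ → ℝ} {M : ℝ}
    (hg : ∀ x ∈ Set.Icc (0 : ℝ) 1, |g x| ≤ M) :
    |pair01 n g| ≤ M * n := by
  have hM : 0 ≤ M := (abs_nonneg _).trans (hg 0 ⟨le_rfl, zero_le_one⟩)
  have hbound : ∀ x ∈ Set.uIoc (0 : ℝ) 1, ‖g x * (n * sin (2 * π * n * x))‖ ≤ M * n :=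
    fun x hx => by
      rw [Set.uIoc_of_le zero_le_one] at hx
      rw [Real.norm_eq_abs, abs_mul, abs_mul, Nat.abs_cast]
      exact mul_le_mul (hg x (Set.Ioc_subset_Icc_self hx))
        (mul_le_of_le_one_right n.cast_nonneg (abs_sin_le_one _)) (by positivity) hM
  simpa [pair01] using norm_integral_le_of_norm_le_const hbound

lemma abs_pair01_le_blStar01 {n : ℕ} {g : ℝ → ℝ} {C : ℝ} {K : NNReal}
    (hC : ∀ x ∈ Set.Icc (0 : ℝ) 1, |g x| ≤ C) (hK : LipschitzOnWith K g (Set.Icc 0 1))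
    (hCK : C + K ≤ 1) : |pair01 n g| ≤ blStar01 n := by
  refine le_csSup ⟨n, ?_⟩ ⟨g, C, K, hC, hK, hCK, rfl⟩
  rintro r ⟨g', C', K', hC', -, hCK', rfl⟩
  exact (abs_pair01_le hC').trans
    (mul_le_of_le_one_left n.cast_nonneg (by linarith [K'.coe_nonneg]))

lemma one_div_two_mul_pi_sq_le_blStar01 {n : ℕ} (hn : n ≠ 0) :
    1 / (2 * π ^ 2) ≤ blStar01 n := by
  have hn1 : (1 : ℝ) ≤ n := Nat.one_le_cast.mpr (Nat.one_le_iff_ne_zero.mpr hn)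
  set c : ℝ := (2 * n)⁻¹
  have hc : 0 < c := by positivity
  have hcn : c * n = 1 / 2 := by simp only [c]; field_simp
  have hc_le : c ≤ 1 / 2 := by nlinarith
  have hbound : ∀ x ∈ Set.Icc (0 : ℝ) 1, |c * triangleWave (n * x)| ≤ 1 / 2 := fun x _ => by
    linarith [abs_const_mul_triangleWave_le c (n * x), abs_of_pos hc]
  have hK : ((‖c‖₊ * ‖(n : ℝ)‖₊ : NNReal) : ℝ) = 1 / 2 := by
    rw [NNReal.coe_mul, coe_nnnorm, coe_nnnorm, norm_of_nonneg hc.le, RCLike.norm_natCast, hcn]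
  have h := abs_pair01_le_blStar01 (n := n) hbound
    (lipschitzWith_const_mul_triangleWave_mul c n).lipschitzOnWith (by rw [hK]; norm_num)
  rwa [pair01_const_mul_triangleWave hn, abs_of_pos (by positivity), hcn, div_div] at h

lemma integral_sin_sq_two_pi_nat_mul {n : ℕ} (hn : n ≠ 0) :
    ∫ x in 0..1, sin (2 * π * n * x) ^ 2 = 1 / 2 := by
  have hc : 2 * π * n ≠ 0 := by positivity
  have hsin : sin (2 * π * n) = 0 := by
    rw [show 2 * π * n = ((2 * n : ℕ) : ℝ) * π by push_cast; ring]
    exact sin_nat_mul_pi _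
  rw [integral_comp_mul_left (fun t => sin t ^ 2) hc, mul_zero, mul_one, integral_sin_sq, hsin,
    sin_zero, smul_eq_mul]
  field_simp
  ring

lemma half_le_integral_abs_nat_mul_sin {n : ℕ} (hn : n ≠ 0) :
    (n : ℝ) / 2 ≤ ∫ x in 0..1, |n * sin (2 * π * n * x)| := by
  have hle : ∀ x ∈ Set.Icc (0 : ℝ) 1,
      n * sin (2 * π * n * x) ^ 2 ≤ |n * sin (2 * π * n * x)| := fun x _ => by
    rw [abs_mul, Nat.abs_cast, ← sq_abs]
    exact mul_le_mul_of_nonneg_left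
      (pow_le_of_le_one (abs_nonneg _) (abs_sin_le_one _) two_ne_zero) n.cast_nonneg
  calc (n : ℝ) / 2 = ∫ x in 0..1, n * sin (2 * π * n * x) ^ 2 := by
        rw [intervalIntegral.integral_const_mul, integral_sin_sq_two_pi_nat_mul hn, mul_one_div]
    _ ≤ ∫ x in 0..1, |n * sin (2 * π * n * x)| :=
        integral_mono_on zero_le_one (Continuous.intervalIntegrable (by fun_prop) 0 1)
          (Continuous.intervalIntegrable (by fun_prop) 0 1) hle

lemma exists_pair01_eq_one_div_pi_sq {n : ℕ} (hn : n ≠ 0) :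
    ∃ g : ℝ → ℝ, LipschitzOnWith 1 g (Set.Icc 0 1) ∧
      (∀ x ∈ Set.Icc (0 : ℝ) 1, |g x| ≤ 1 / (4 * n)) ∧ pair01 n g = 1 / π ^ 2 := by
  have hn' : (0 : ℝ) < n := by positivity
  refine ⟨fun x => (n : ℝ)⁻¹ * triangleWave (n * x), ?_, fun x _ => ?_, ?_⟩
  · have h := (lipschitzWith_const_mul_triangleWave_mul (n : ℝ)⁻¹ n).lipschitzOnWith
      (s := Set.Icc (0 : ℝ) 1)
    rwa [← nnnorm_mul, inv_mul_cancel₀ hn'.ne', nnnorm_one] at h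
  · have h := abs_const_mul_triangleWave_le (n : ℝ)⁻¹ (n * x)
    rw [abs_of_pos (inv_pos.mpr hn'), inv_div_left] at h
    exact h.trans_eq (one_div _).symm
  · rw [pair01_const_mul_triangleWave hn, inv_mul_cancel₀ hn'.ne']

/-- For `μ_n` the signed measure on `[0,1]` with density `x ↦ n·sin(2πnx)`:
the total variation norms `‖μ_n‖_TV = ∫_0^1 |n·sin(2πnx)| dx` are unbounded, the dual bounded
Lipschitz norms `‖μ_n‖*_BL` do not converge to `0`, and for each `n ≥ 1` there is `g_n` with
Lipschitz constant `1` and `‖g_n‖_∞ ≤ 1/(4n)` on `[0,1]` such that `⟨μ_n, g_n⟩ = 1/π²`. -/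
theorem sin_density_counterexample :
    (¬ ∃ C : ℝ, ∀ n : ℕ,
        (∫ x in (0:ℝ)..1, |(n : ℝ) * Real.sin (2 * Real.pi * (n : ℝ) * x)|) ≤ C) ∧
    (¬ Tendsto blStar01 atTop (𝓝 0)) ∧
    (∀ n : ℕ, 1 ≤ n → ∃ g : ℝ → ℝ, LipschitzOnWith 1 g (Set.Icc (0:ℝ) 1) ∧
      (∀ x ∈ Set.Icc (0:ℝ) 1, |g x| ≤ 1 / (4 * (n : ℝ))) ∧
      pair01 n g = 1 / Real.pi ^ 2) := by
  refine ⟨?_, ?_, ?_⟩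
  · rintro ⟨C, hC⟩
    obtain ⟨n, hn⟩ := exists_nat_gt (2 * C)
    have h := (half_le_integral_abs_nat_mul_sin n.succ_ne_zero).trans (hC (n + 1))
    push_cast at h
    linarith
  · intro h
    have hpos : 0 < 1 / (2 * π ^ 2) := by positivity
    exact hpos.not_ge (ge_of_tendsto h ((eventually_ne_atTop 0).mono
      fun n hn => one_div_two_mul_pi_sq_le_blStar01 hn))
  · exact fun n hn => exists_pair01_eq_one_div_pi_sq (Nat.one_le_iff_ne_zero.mp hn)
end

section
/- Let (S,d) be a complete separable metric space and let M ⊆ M(S) satisfy m := sup_{μ ∈ M} ‖μ‖_TV < ∞. Suppose that for every μ ∈ M and every ε > 0 there exist compact sets K_1, …, K_n ⊆ S such that, with K = K_1 ∪ … ∪ K_n: (i) |μ|(S∖K) < ε, and (ii) there exists 0 < λ₀ ≤ ε such that for every 0 < λ ≤ λ₀ there exist δ_1, …, δ_n > 0 with the property that whenever ν ∈ M satisfies |∫_S h_{λ,K_i} d(μ−ν)| < δ_i for all i = 1,…,n, then |ν|(S∖K^λ) < ε. Then the restriction to M of the σ(M(S), BL(S))-weak topology is first countable. -/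
open MeasureTheory Filter Topology

/-- Pairing of a finite signed Borel measure with a function, via the Jordan decomposition. -/
noncomputable def pairing {S : Type*} [MeasurableSpace S] (μ : SignedMeasure S) (f : S → ℝ) : ℝ :=
  (∫ x, f x ∂μ.toJordanDecomposition.posPart) - ∫ x, f x ∂μ.toJordanDecomposition.negPart

/-- Total variation norm of a finite signed measure. -/
noncomputable def tvNorm {S : Type*} [MeasurableSpace S] (μ : SignedMeasure S) : ℝ :=
  (μ.totalVariation Set.univ).toReal

/-- Dual bounded Lipschitz norm on signed measures. -/
noncomputable def blDualNorm {S : Type*} [PseudoMetricSpace S] [MeasurableSpace S]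
    (μ : SignedMeasure S) : ℝ :=
  sSup {r : ℝ | ∃ (f : S → ℝ) (C : ℝ) (K : NNReal), (∀ x, |f x| ≤ C) ∧
    LipschitzWith K f ∧ C + (K : ℝ) ≤ 1 ∧ r = |pairing μ f|}

/-- The `σ(M(S), BL(S))`-weak topology on `M(S)`: the coarsest topology making
`μ ↦ ⟨μ, f⟩` continuous for every bounded Lipschitz `f`. -/
noncomputable def weakTop (S : Type*) [PseudoMetricSpace S] [MeasurableSpace S] :
    TopologicalSpace (SignedMeasure S) :=
  ⨅ f : {g : S → ℝ // IsBL g},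
    TopologicalSpace.induced (fun μ : SignedMeasure S => pairing μ f.1) inferInstance

/-- The function `h_{λ,C}(x) = max(1 − d(x,C)/λ, 0)`. -/
noncomputable def hFun {S : Type*} [MetricSpace S] (lam : ℝ) (C : Set S) (x : S) : ℝ :=
  max (1 - Metric.infDist x C / lam) 0

/-!
At a point `μ ∈ M` the relative weak topology has the same neighbourhoods as the topology
induced by countably many pairings: with the functions `h_{λ_k, K_{k,i}}` that the hypothesis
attaches to `μ` at the scales `ε = 1/(k+1)`, and with the truncated McShane functions
`x ↦ min_p (q_p + N d(x, c_p))` built on finitely many centres `c_p` of a countable dense set,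
rational values `q_p` and `N ∈ ℕ`.
If `ν → μ` against the first family, the hypothesis makes `|ν|(S ∖ K^λ)` small. A bounded
Lipschitz `f` is uniformly close on `K^λ` to some `g` of the second family, and since the total
variations are bounded by `m`, `⟨ν - μ, f⟩` is then close to `⟨ν - μ, g⟩`, which tends to `0`.
-/

section Pairing

variable {S : Type*} [MeasurableSpace S] {f g : S → ℝ} {C : ℝ}

lemma Measurable.integrable_of_abs_le (hfm : Measurable f) (hfC : ∀ x, |f x| ≤ C)
    (κ : Measure S) [IsFiniteMeasure κ] : Integrable f κ :=
  .of_bound hfm.aestronglyMeasurable C (ae_of_all _ hfC)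

lemma pairing_sub_left (a b : SignedMeasure S) (hfm : Measurable f) (hfC : ∀ x, |f x| ≤ C) :
    pairing (a - b) f = pairing a f - pairing b f := by
  have hJ (c : SignedMeasure S) : c.toJordanDecomposition.posPart.toSignedMeasure -
      c.toJordanDecomposition.negPart.toSignedMeasure = c :=
    c.toSignedMeasure_toJordanDecomposition
  have key : (a - b).toJordanDecomposition.posPart + a.toJordanDecomposition.negPart +
      b.toJordanDecomposition.posPart = (a - b).toJordanDecomposition.negPart +
      a.toJordanDecomposition.posPart + b.toJordanDecomposition.negPart := by
    rw [← Measure.toSignedMeasure_eq_toSignedMeasure_iff]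
    simp only [Measure.toSignedMeasure_add]
    linear_combination (norm := abel) hJ (a - b) - hJ a + hJ b
  have hint := hfm.integrable_of_abs_le hfC
  have := congrArg (fun κ => ∫ x, f x ∂κ) key
  simp only [integral_add_measure (hint _) (hint _)] at this
  unfold pairing
  linarith

lemma pairing_sub_right (a : SignedMeasure S) (hfm : Measurable f) (hfC : ∀ x, |f x| ≤ C)
    (hgm : Measurable g) {C' : ℝ} (hgC : ∀ x, |g x| ≤ C') :
    pairing a (fun x => f x - g x) = pairing a f - pairing a g := by
  have hf := hfm.integrable_of_abs_le hfC
  have hg := hgm.integrable_of_abs_le hgC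
  unfold pairing
  rw [integral_sub (hf _) (hg _), integral_sub (hf _) (hg _)]
  ring

lemma abs_pairing_le_integral_abs (a : SignedMeasure S) (hfm : Measurable f)
    (hfC : ∀ x, |f x| ≤ C) : |pairing a f| ≤ ∫ x, |f x| ∂a.totalVariation := by
  have hint := hfm.integrable_of_abs_le hfC
  rw [SignedMeasure.totalVariation, integral_add_measure (hint _).abs (hint _).abs]
  exact (abs_sub _ _).trans (add_le_add abs_integral_le_integral_abs abs_integral_le_integral_abs)

lemma abs_pairing_le_of_abs_le_on (a : SignedMeasure S) (hfm : Measurable f) {Q : Set S}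
    (hQ : MeasurableSet Q) {η b : ℝ} (hη : ∀ x ∈ Q, |f x| ≤ η) (hb : ∀ x, |f x| ≤ b) :
    |pairing a f| ≤ η * (a.totalVariation Q).toReal + b * (a.totalVariation Qᶜ).toReal := by
  have hint := (hfm.integrable_of_abs_le hb a.totalVariation).abs
  calc |pairing a f| ≤ ∫ x, |f x| ∂a.totalVariation := abs_pairing_le_integral_abs a hfm hb
    _ = ∫ x in Q, |f x| ∂a.totalVariation + ∫ x in Qᶜ, |f x| ∂a.totalVariation :=
      (integral_add_compl hQ hint).symm
    _ ≤ ∫ _ in Q, η ∂a.totalVariation + ∫ _ in Qᶜ, b ∂a.totalVariation :=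
      add_le_add (setIntegral_mono_on hint.integrableOn integrableOn_const hQ hη)
        (setIntegral_mono_on hint.integrableOn integrableOn_const hQ.compl fun x _ => hb x)
    _ = η * (a.totalVariation Q).toReal + b * (a.totalVariation Qᶜ).toReal := by
      simp [measureReal_def, mul_comm]

lemma abs_pairing_sub_pairing_le {ρ : SignedMeasure S} {N : ℕ}
    (hfm : Measurable f) (hfN : ∀ x, |f x| ≤ N) (hgm : Measurable g) (hgN : ∀ x, |g x| ≤ N)
    {Q : Set S} (hQ : MeasurableSet Q) {η m ε : ℝ} (hη : 0 ≤ η) (hfgQ : ∀ x ∈ Q, |f x - g x| ≤ η)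
    (hρm : tvNorm ρ ≤ m) (hρQ : (ρ.totalVariation Qᶜ).toReal ≤ ε) :
    |pairing ρ f - pairing ρ g| ≤ η * m + 2 * N * ε := by
  have hfg (x : S) : |f x - g x| ≤ 2 * N := by linarith [abs_sub (f x) (g x), hfN x, hgN x]
  rw [← pairing_sub_right ρ hfm hfN hgm hgN]
  refine (abs_pairing_le_of_abs_le_on ρ (hfm.sub hgm) hQ hfgQ hfg).trans
    (add_le_add (mul_le_mul_of_nonneg_left ?_ hη) (mul_le_mul_of_nonneg_left hρQ (by positivity)))
  exact (ENNReal.toReal_mono (measure_ne_top _ _) (measure_mono (Set.subset_univ Q))).trans hρm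

lemma eventually_of_tendsto_pairing {α : Type*} {l : Filter α} {ν : α → SignedMeasure S}
    {μ : SignedMeasure S} {ι : Type*} [Finite ι] {h : ι → S → ℝ}
    (hm : ∀ i, Measurable (h i)) (hC : ∀ i x, |h i x| ≤ C) {δ : ι → ℝ} (hδ : ∀ i, 0 < δ i)
    (hconv : ∀ i, Tendsto (fun a => pairing (ν a) (h i)) l (𝓝 (pairing μ (h i))))
    {P : α → Prop} (hP : ∀ a, (∀ i, |pairing (μ - ν a) (h i)| < δ i) → P a) :
    ∀ᶠ a in l, P a := by
  filter_upwards [eventually_all.2 fun i => (hconv i).eventually (Metric.ball_mem_nhds _ (hδ i))]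
    with a ha
  refine hP a fun i => ?_
  rw [pairing_sub_left _ _ (hm i) (hC i), abs_sub_comm]
  exact ha i

end Pairing

section HFun

variable {S : Type*} [MetricSpace S] {lam : ℝ}

lemma abs_hFun_le_one (hlam : 0 < lam) (C : Set S) (x : S) : |hFun lam C x| ≤ 1 := by
  have : 0 ≤ Metric.infDist x C / lam := div_nonneg Metric.infDist_nonneg hlam.le
  refine abs_le.2 ⟨(neg_nonpos.2 zero_le_one).trans (le_max_right _ _), max_le ?_ zero_le_one⟩
  linarith

lemma lipschitzWith_hFun (hlam : 0 < lam) (C : Set S) :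
    LipschitzWith (Real.toNNReal lam⁻¹) (hFun lam C) := by
  refine LipschitzWith.of_dist_le_mul fun x y => ?_
  have hd : |Metric.infDist x C - Metric.infDist y C| ≤ dist x y := by
    simpa [Real.dist_eq] using (Metric.lipschitz_infDist_pt C).dist_le_mul x y
  rw [Real.dist_eq, Real.coe_toNNReal _ (inv_nonneg.2 hlam.le)]
  calc _ ≤ |(1 - Metric.infDist x C / lam) - (1 - Metric.infDist y C / lam)| :=
        abs_max_sub_max_le_abs _ _ _
    _ = lam⁻¹ * |Metric.infDist x C - Metric.infDist y C| := by
      rw [← abs_of_pos (inv_pos.2 hlam), ← abs_mul, abs_sub_comm]; ring_nf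
    _ ≤ lam⁻¹ * dist x y := by gcongr

lemma isBL_hFun (hlam : 0 < lam) (C : Set S) : IsBL (hFun lam C) :=
  ⟨⟨1, abs_hFun_le_one hlam C⟩, _, lipschitzWith_hFun hlam C⟩

end HFun

section Lipschitz

variable {S : Type*} [PseudoMetricSpace S] {ι : Type*}

lemma LipschitzWith.finset_inf' {K : NNReal} {G : Finset ι} (hG : G.Nonempty) {φ : ι → S → ℝ}
    (hφ : ∀ i ∈ G, LipschitzWith K (φ i)) : LipschitzWith K (G.inf' hG φ) :=
  Finset.inf'_induction hG φ (fun _ h₁ _ h₂ => by have := h₁.min h₂; rwa [max_self] at this) hφ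

lemma LipschitzWith.abs_le_add_mul_of_mem_cthickening {φ : S → ℝ} {L : NNReal}
    (hφ : LipschitzWith L φ) {K : Set S} (hK : IsCompact K) {η lam : ℝ} (hlam : 0 ≤ lam)
    (hKφ : ∀ y ∈ K, |φ y| ≤ η) {z : S} (hz : z ∈ Metric.cthickening lam K) :
    |φ z| ≤ η + L * lam := by
  rw [hK.cthickening_eq_biUnion_closedBall hlam] at hz
  obtain ⟨y, hy, hzy⟩ := Set.mem_iUnion₂.1 hz
  have hφzy : |φ z - φ y| ≤ L * lam := by
    simpa [Real.dist_eq] using (hφ.dist_le_mul z y).trans (by gcongr; exact hzy)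
  linarith [abs_sub_abs_le_abs_sub (φ z) (φ y), hKφ y hy]

lemma abs_clamp_sub_le {v w a : ℝ} (hw : |w| ≤ a) : |max (min v a) (-a) - w| ≤ |v - w| := by
  obtain ⟨h₁, h₂⟩ := abs_le.1 hw
  calc |max (min v a) (-a) - w| = |max (min v a) (-a) - max (min w a) (-a)| := by
        rw [min_eq_left h₂, max_eq_left h₁]
    _ ≤ |min v a - min w a| := abs_max_sub_max_le_abs _ _ _
    _ ≤ |v - w| := by simpa using abs_min_sub_min_le_max v a w a

lemma LipschitzWith.abs_inf'_sub_le {f : S → ℝ} {N : ℕ} (hf : LipschitzWith N f) {G : Finset ι}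
    (hG : G.Nonempty) {c : ι → S} {q : ι → ℝ} {z : S}
    {η : ℝ} (hq : ∀ i ∈ G, |q i - f (c i)| ≤ η) (hz : ∃ i ∈ G, dist z (c i) ≤ η) :
    |(G.inf' hG fun i => q i + N * dist z (c i)) - f z| ≤ (2 * N + 1) * η := by
  have hfc (i : ι) : |f z - f (c i)| ≤ N * dist z (c i) := by
    simpa [Real.dist_eq] using hf.dist_le_mul z (c i)
  obtain ⟨j, hjG, hzj⟩ := hz
  refine abs_le.2 ⟨?_, ?_⟩
  · have : f z - η ≤ G.inf' hG fun i => q i + N * dist z (c i) :=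
      Finset.le_inf' hG _ fun i hi => by
        linarith [(abs_le.1 (hq i hi)).1, (abs_le.1 (hfc i)).2]
    have : 0 ≤ (N : ℝ) * η := by
      have := (abs_nonneg _).trans (hq j hjG); positivity
    linarith
  · have := Finset.inf'_le (fun i => q i + N * dist z (c i)) hjG
    have := mul_le_mul_of_nonneg_left hzj (Nat.cast_nonneg (α := ℝ) N)
    linarith [(abs_le.1 (hq j hjG)).2, (abs_le.1 (hfc j)).1]

end Lipschitz

section McShane

variable {S : Type*} [PseudoMetricSpace S] {ι : Type*}

noncomputable def clampedMcShane (c : ι → S) (q : ι → ℝ) (N : ℕ) (G : Finset ι) : S → ℝ :=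
  if hG : G.Nonempty then
    fun x => max (min (G.inf' hG fun i => q i + N * dist x (c i)) N) (-N)
  else 0

variable {c : ι → S} {q : ι → ℝ} {N : ℕ} {G : Finset ι}

lemma abs_clampedMcShane_le (x : S) : |clampedMcShane c q N G x| ≤ N := by
  unfold clampedMcShane
  split_ifs
  · exact abs_le.2 ⟨le_max_right _ _, max_le (min_le_right _ _) (by simp)⟩
  · simp

lemma lipschitzWith_clampedMcShane : LipschitzWith N (clampedMcShane c q N G) := by
  unfold clampedMcShane
  split_ifs with hG
  · have hcone (i : ι) : LipschitzWith N fun x => q i + N * dist x (c i) :=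
      LipschitzWith.of_dist_le_mul fun x y => by
        rw [Real.dist_eq, add_sub_add_left_eq_sub, ← mul_sub, abs_mul, Nat.abs_cast,
          NNReal.coe_natCast]
        gcongr
        exact abs_dist_sub_le x y (c i)
    simpa [Finset.inf'_apply] using
      ((LipschitzWith.finset_inf' hG fun i _ => hcone i).min_const N).max_const (-N)
  · exact (LipschitzWith.const (α := S) (0 : ℝ)).weaken (zero_le : (0 : NNReal) ≤ N)

lemma isBL_clampedMcShane : IsBL (clampedMcShane c q N G) :=
  ⟨⟨N, abs_clampedMcShane_le⟩, N, lipschitzWith_clampedMcShane⟩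

lemma exists_clampedMcShane_approx {D : Set S} (hD : Dense D) {f : S → ℝ}
    (hfN : ∀ x, |f x| ≤ N) (hf : LipschitzWith N f) {K : Set S} (hK : IsCompact K) {η : ℝ}
    (hη : 0 < η) : ∃ G : Finset (D × ℚ), ∀ z ∈ K,
      |f z - clampedMcShane (fun p => (p.1 : S)) (fun p => (p.2 : ℝ)) N G z| ≤ (2 * N + 1) * η := by
  classical
  obtain ⟨t, ht⟩ := hK.elim_finite_subcover (fun d : D => Metric.ball (d : S) η)
    (fun _ => Metric.isOpen_ball) fun z _ => by
      obtain ⟨d, hd, hzd⟩ := hD.exists_dist_lt z hη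
      exact Set.mem_iUnion.2 ⟨⟨d, hd⟩, hzd⟩
  choose r hr using fun d : D => exists_rat_near (f d) hη
  refine ⟨t.image fun d => (d, r d), fun z hz => ?_⟩
  obtain ⟨d, hdt, hzd⟩ : ∃ d ∈ t, dist z d < η := by simpa using ht hz
  have hG : (t.image fun d => (d, r d)).Nonempty := ⟨_, Finset.mem_image_of_mem _ hdt⟩
  rw [abs_sub_comm, clampedMcShane, dif_pos hG]
  refine (abs_clamp_sub_le (hfN z)).trans (hf.abs_inf'_sub_le hG ?_
    ⟨_, Finset.mem_image_of_mem _ hdt, hzd.le⟩)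
  intro p hp
  obtain ⟨d, -, rfl⟩ := Finset.mem_image.1 hp
  exact (abs_sub_comm _ _).trans_le (hr d).le

end McShane

theorem tendsto_pairing_of_tendsto_clampedMcShane {S : Type*} [PseudoMetricSpace S]
    [MeasurableSpace S] [OpensMeasurableSpace S] {α : Type*} {l : Filter α}
    {ν : α → SignedMeasure S} {μ : SignedMeasure S} {m : ℝ} (hνm : ∀ a, tvNorm (ν a) ≤ m)
    (hμm : tvNorm μ ≤ m)
    (htight : ∀ ε > 0, ∃ K : Set S, IsCompact K ∧ (μ.totalVariation Kᶜ).toReal < ε ∧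
      ∃ lam, 0 ≤ lam ∧ lam ≤ ε ∧
        ∀ᶠ a in l, ((ν a).totalVariation (Metric.cthickening lam K)ᶜ).toReal < ε)
    {D : Set S} (hD : Dense D) (hconv : ∀ (G : Finset (D × ℚ)) (N : ℕ),
      Tendsto (fun a => pairing (ν a) (clampedMcShane (fun p => (p.1 : S)) (fun p => p.2) N G))
        l (𝓝 (pairing μ (clampedMcShane (fun p => (p.1 : S)) (fun p => p.2) N G))))
    {f : S → ℝ} (hf : IsBL f) : Tendsto (fun a => pairing (ν a) f) l (𝓝 (pairing μ f)) := by
  obtain ⟨⟨C, hC⟩, L, hL⟩ := hf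
  set N := ⌈max C L⌉₊
  have hfN (x : S) : |f x| ≤ N := (hC x).trans ((le_max_left _ _).trans (Nat.le_ceil _))
  have hfL : LipschitzWith N f := hL.weaken <| by
    rw [← NNReal.coe_le_coe, NNReal.coe_natCast]
    exact (le_max_right _ _).trans (Nat.le_ceil _)
  rw [Metric.tendsto_nhds]
  intro ε' hε'
  obtain ⟨ε, hε, hεε'⟩ := exists_pos_mul_lt (half_pos hε') (2 * ((4 * N + 1) * m + 2 * N))
  obtain ⟨K, hK, hμK, lam, hlam, hlamε, hνK⟩ := htight ε hε
  obtain ⟨G, hG⟩ := exists_clampedMcShane_approx hD hfN hfL hK hε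
  set g := clampedMcShane (fun p : D × ℚ => (p.1 : S)) (fun p => (p.2 : ℝ)) N G
  set Q := Metric.cthickening lam K
  have hfgQ (z) (hz : z ∈ Q) : |f z - g z| ≤ (4 * N + 1) * ε := by
    have := (hfL.sub lipschitzWith_clampedMcShane).abs_le_add_mul_of_mem_cthickening hK hlam hG hz
    have := mul_le_mul_of_nonneg_left hlamε (by positivity : (0 : ℝ) ≤ N + N)
    push_cast at *
    linarith
  have hest (ρ : SignedMeasure S) (hρm : tvNorm ρ ≤ m) (hρ : (ρ.totalVariation Qᶜ).toReal ≤ ε) :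
      |pairing ρ f - pairing ρ g| ≤ (4 * N + 1) * ε * m + 2 * N * ε :=
    abs_pairing_sub_pairing_le hL.continuous.measurable hfN
      lipschitzWith_clampedMcShane.continuous.measurable abs_clampedMcShane_le
      Metric.isClosed_cthickening.measurableSet (by positivity) hfgQ hρm hρ
  have hμQ : (μ.totalVariation Qᶜ).toReal ≤ ε :=
    (ENNReal.toReal_mono (measure_ne_top _ _) (measure_mono
      (Set.compl_subset_compl.2 (Metric.self_subset_cthickening K)))).trans hμK.le
  filter_upwards [hνK, Metric.tendsto_nhds.1 (hconv G N) _ (half_pos hε')] with a ha hga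
  have h₁ := abs_le.1 (hest (ν a) (hνm a) ha.le)
  have h₂ := abs_le.1 (hest μ hμm hμQ)
  rw [Real.dist_eq, abs_lt] at hga ⊢
  constructor <;> linarith

theorem isCountablyGenerated_nhds_iInf_induced {X Y ι κ : Type*} [TopologicalSpace Y]
    [FirstCountableTopology Y] [Countable κ] (F : ι → X → Y) (T : κ → ι) (x : X)
    (h : ∀ i, Tendsto (F i) (⨅ j, comap (F (T j)) (𝓝 (F (T j) x))) (𝓝 (F i x))) :
    (@nhds X (⨅ i, TopologicalSpace.induced (F i) ‹_›) x).IsCountablyGenerated := by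
  rw [nhds_iInf]
  simp only [nhds_induced]
  rw [le_antisymm (le_iInf fun j => iInf_le _ (T j)) (le_iInf fun i => (h i).le_comap)]
  infer_instance

lemma induced_subtypeVal_weakTop {S : Type*} [PseudoMetricSpace S] [MeasurableSpace S]
    (M : Set (SignedMeasure S)) :
    TopologicalSpace.induced ((↑) : M → SignedMeasure S) (weakTop S) =
      ⨅ f : {g : S → ℝ // IsBL g}, TopologicalSpace.induced
        (fun ν : M => pairing (ν : SignedMeasure S) f.1) inferInstance := by
  simp only [weakTop, induced_iInf, induced_compose]
  rfl

theorem firstCountable_of_tractable_condition_general {S : Type*} [MetricSpace S]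
    [TopologicalSpace.SeparableSpace S] [MeasurableSpace S] [BorelSpace S]
    (M : Set (SignedMeasure S)) (hTV : ∃ m : ℝ, ∀ μ ∈ M, tvNorm μ ≤ m)
    (hcond : ∀ μ ∈ M, ∀ ε : ℝ, 0 < ε → ∃ (n : ℕ) (K : Fin n → Set S),
      (∀ i, IsCompact (K i)) ∧
      (((μ : SignedMeasure S).totalVariation (⋃ i, K i)ᶜ).toReal < ε) ∧
      ∃ lam₀ : ℝ, 0 < lam₀ ∧ lam₀ ≤ ε ∧ ∀ lam : ℝ, 0 < lam → lam ≤ lam₀ →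
        ∃ δ : Fin n → ℝ, (∀ i, 0 < δ i) ∧ ∀ ν ∈ M,
          (∀ i, |pairing (μ - ν) (hFun lam (K i))| < δ i) →
          ((ν : SignedMeasure S).totalVariation (Metric.cthickening lam (⋃ i, K i))ᶜ).toReal
            < ε) :
    @FirstCountableTopology M
      (TopologicalSpace.induced ((↑) : M → SignedMeasure S) (weakTop S)) := by
  obtain ⟨m, hm⟩ := hTV
  obtain ⟨D, hDc, hD⟩ := TopologicalSpace.exists_countable_dense S
  have := hDc.to_subtype
  rw [induced_subtypeVal_weakTop]
  refine FirstCountableTopology.mk (t := ?_) fun μ => ?_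
  choose n K hK hKμ lam₀ hlam₀ hlam₀ε hδ using
    fun k : ℕ => hcond μ μ.2 (1 / (k + 1)) (by positivity)
  choose δ hδ hδν using fun k => hδ k (lam₀ k) (hlam₀ k) le_rfl
  let T : (Σ k, Fin (n k)) ⊕ (Finset (D × ℚ) × ℕ) → {g : S → ℝ // IsBL g} :=
    Sum.elim (fun j => ⟨hFun (lam₀ j.1) (K j.1 j.2), isBL_hFun (hlam₀ j.1) _⟩)
      fun j => ⟨clampedMcShane (fun p : D × ℚ => (p.1 : S)) (fun p => p.2) j.2 j.1,
        isBL_clampedMcShane⟩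
  let F (f : {g : S → ℝ // IsBL g}) (ν : M) : ℝ := pairing (ν : SignedMeasure S) f.1
  let L := ⨅ j, comap (F (T j)) (𝓝 (F (T j) μ))
  have hT (j) : Tendsto (F (T j)) L (𝓝 (F (T j) μ)) := tendsto_iInf' j tendsto_comap
  refine isCountablyGenerated_nhds_iInf_induced F T μ fun f =>
    tendsto_pairing_of_tendsto_clampedMcShane (l := L) (ν := Subtype.val) (fun ν => hm ν ν.2)
      (hm μ μ.2) (fun ε hε => ?_) hD (fun G N => hT (.inr (G, N))) f.2
  obtain ⟨k, hk⟩ := exists_nat_one_div_lt hε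
  refine ⟨⋃ i, K k i, isCompact_iUnion (hK k), (hKμ k).trans hk, lam₀ k, (hlam₀ k).le,
    (hlam₀ε k).trans hk.le, ?_⟩
  exact eventually_of_tendsto_pairing
    (fun _ => (lipschitzWith_hFun (hlam₀ k) _).continuous.measurable)
    (fun _ => abs_hFun_le_one (hlam₀ k) _) (hδ k) (fun i => hT (.inl ⟨k, i⟩))
    fun ν h => (hδν k ν ν.2 h).trans hk

/-- Lemma providing a tractable condition for first countability of the relative
`σ(M(S), BL(S))`-weak topology on a set `M` of signed measures which is bounded in total
variation norm. -/
theorem firstCountable_of_tractable_condition {S : Type*} [MetricSpace S] [CompleteSpace S]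
    [TopologicalSpace.SeparableSpace S] [MeasurableSpace S] [BorelSpace S]
    (M : Set (SignedMeasure S)) (hTV : ∃ m : ℝ, ∀ μ ∈ M, tvNorm μ ≤ m)
    (hcond : ∀ μ ∈ M, ∀ ε : ℝ, 0 < ε → ∃ (n : ℕ) (K : Fin n → Set S),
      (∀ i, IsCompact (K i)) ∧
      (((μ : SignedMeasure S).totalVariation (⋃ i, K i)ᶜ).toReal < ε) ∧
      ∃ lam₀ : ℝ, 0 < lam₀ ∧ lam₀ ≤ ε ∧ ∀ lam : ℝ, 0 < lam → lam ≤ lam₀ →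
        ∃ δ : Fin n → ℝ, (∀ i, 0 < δ i) ∧ ∀ ν ∈ M,
          (∀ i, |pairing (μ - ν) (hFun lam (K i))| < δ i) →
          ((ν : SignedMeasure S).totalVariation (Metric.cthickening lam (⋃ i, K i))ᶜ).toReal
            < ε) :
    @FirstCountableTopology M
      (TopologicalSpace.induced ((↑) : M → SignedMeasure S) (weakTop S)) :=
  firstCountable_of_tractable_condition_general M hTV hcond
end

section
/- Let (S,d) be a metric space and let (f_k)_{k ≥ 1} ⊆ BL(S) be such that sup_{k ≥ 1} ‖f_k‖_BL < ∞ and the supports of the f_k (the closures of the sets where f_k is nonzero) are pairwise disjoint. Then the series f(x) = Σ_{k=1}^∞ f_k(x) converges pointwise, f ∈ BL(S), and ‖f‖_∞ ≤ sup_{k ≥ 1} ‖f_k‖_∞ and |f|_L ≤ 2·sup_{k ≥ 1} |f_k|_L. -/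
open Filter Topology

noncomputable def lipConst {S : Type*} [PseudoMetricSpace S] (f : S → ℝ) : ℝ :=
  sSup {r : ℝ | ∃ x y : S, x ≠ y ∧ r = |f x - f y| / dist x y}

noncomputable def supNorm {S : Type*} (f : S → ℝ) : ℝ :=
  sSup {r : ℝ | ∃ x : S, r = |f x|}

noncomputable def blNorm {S : Type*} [PseudoMetricSpace S] (f : S → ℝ) : ℝ :=
  supNorm f + lipConst f

/-! At each point at most one `f k` is nonzero, so the series `∑ₖ fₖ(x)` reduces to a single
term `f_{k(x)}(x)`. The uniform bound is then immediate, and for the Lipschitz bound, when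
`k(x) ≠ k(y)` one splits `f_{k(x)}(x) - f_{k(y)}(y)` as
`(f_{k(x)}(x) - f_{k(x)}(y)) + (f_{k(y)}(x) - f_{k(y)}(y))` (the two added terms vanish),
which costs the factor `2`. -/

open Function

section Norms

variable {S : Type*}

lemma supNorm_nonneg (f : S → ℝ) : 0 ≤ supNorm f :=
  Real.sSup_nonneg (by rintro r ⟨x, rfl⟩; exact abs_nonneg _)

lemma abs_le_supNorm {f : S → ℝ} (hf : ∃ C : ℝ, ∀ x, |f x| ≤ C) (x : S) : |f x| ≤ supNorm f := by
  obtain ⟨C, hC⟩ := hf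
  exact le_csSup ⟨C, by rintro r ⟨y, rfl⟩; exact hC y⟩ ⟨x, rfl⟩

lemma supNorm_le {f : S → ℝ} {M : ℝ} (hf : ∀ x, |f x| ≤ M) (hM : 0 ≤ M) : supNorm f ≤ M :=
  Real.sSup_le (by rintro r ⟨x, rfl⟩; exact hf x) hM

variable [PseudoMetricSpace S]

lemma lipConst_nonneg (f : S → ℝ) : 0 ≤ lipConst f :=
  Real.sSup_nonneg (by rintro r ⟨x, y, -, rfl⟩; positivity)

lemma lipConst_le {f : S → ℝ} {L : ℝ} (hf : ∀ x y, |f x - f y| ≤ L * dist x y) (hL : 0 ≤ L) :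
    lipConst f ≤ L :=
  Real.sSup_le (by
    rintro r ⟨x, y, -, rfl⟩
    exact div_le_of_le_mul₀ dist_nonneg hL (hf x y)) hL

lemma LipschitzWith.abs_sub_le_lipConst {f : S → ℝ} {K : NNReal} (hf : LipschitzWith K f)
    (x y : S) : |f x - f y| ≤ lipConst f * dist x y := by
  have hfK : ∀ a b, |f a - f b| ≤ K * dist a b := fun a b => by
    simpa only [Real.dist_eq] using hf.dist_le_mul a b
  rcases (dist_nonneg : 0 ≤ dist x y).eq_or_lt with hxy | hxy
  · simpa [← hxy] using hfK x y
  · have hbdd : BddAbove {r : ℝ | ∃ x y : S, x ≠ y ∧ r = |f x - f y| / dist x y} := by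
      refine ⟨K, ?_⟩
      rintro r ⟨a, b, -, rfl⟩
      exact div_le_of_le_mul₀ dist_nonneg K.coe_nonneg (hfK a b)
    have hne : x ≠ y := fun h => hxy.ne' (h ▸ dist_self x)
    exact (div_le_iff₀ hxy).1 (le_csSup hbdd ⟨x, y, hne, rfl⟩)

lemma supNorm_le_blNorm (f : S → ℝ) : supNorm f ≤ blNorm f :=
  le_add_of_nonneg_right (lipConst_nonneg f)

lemma lipConst_le_blNorm (f : S → ℝ) : lipConst f ≤ blNorm f :=
  le_add_of_nonneg_left (supNorm_nonneg f)

lemma isBL_of_bounds {f : S → ℝ} {M L : ℝ} (hM : ∀ x, |f x| ≤ M)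
    (hL : ∀ x y, |f x - f y| ≤ L * dist x y) : IsBL f :=
  ⟨⟨M, hM⟩, ⟨_, LipschitzWith.of_dist_le' fun x y => by simpa only [Real.dist_eq] using hL x y⟩⟩

end Norms

section DisjointSupport

variable {ι α : Type*} {f : ι → α → ℝ}

lemma exists_forall_ne_eq_zero_of_pairwise_disjoint_support [Nonempty ι]
    (hf : Pairwise (Disjoint on fun k => support (f k))) (x : α) :
    ∃ k, ∀ m ≠ k, f m x = 0 := by
  by_cases h : ∃ k, f k x ≠ 0
  · obtain ⟨k, hk⟩ := h
    refine ⟨k, fun m hmk => ?_⟩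
    by_contra hm
    exact (hf hmk).ne_of_mem hm hk rfl
  · simp only [not_exists, not_not] at h
    exact ⟨Classical.arbitrary ι, fun m _ => h m⟩

variable [Nonempty ι] (hf : Pairwise (Disjoint on fun k => support (f k)))
include hf

lemma summable_of_pairwise_disjoint_support (x : α) : Summable fun k => f k x := by
  obtain ⟨k, hk⟩ := exists_forall_ne_eq_zero_of_pairwise_disjoint_support hf x
  exact summable_of_ne_finset_zero (s := {k}) fun m hm => hk m (by simpa using hm)

lemma abs_tsum_le_of_pairwise_disjoint_support {M : ℝ} {x : α} (hM : ∀ k, |f k x| ≤ M) :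
    |∑' k, f k x| ≤ M := by
  obtain ⟨k, hk⟩ := exists_forall_ne_eq_zero_of_pairwise_disjoint_support hf x
  rw [tsum_eq_single k hk]
  exact hM k

lemma abs_tsum_sub_tsum_le_of_pairwise_disjoint_support [PseudoMetricSpace α] {L : ℝ}
    (hL : ∀ k x y, |f k x - f k y| ≤ L * dist x y) (x y : α) :
    |∑' k, f k x - ∑' k, f k y| ≤ 2 * L * dist x y := by
  obtain ⟨k, hk⟩ := exists_forall_ne_eq_zero_of_pairwise_disjoint_support hf x
  obtain ⟨m, hm⟩ := exists_forall_ne_eq_zero_of_pairwise_disjoint_support hf y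
  have hLd : 0 ≤ L * dist x y := (abs_nonneg _).trans (hL k x y)
  rw [tsum_eq_single k hk, tsum_eq_single m hm]
  by_cases hkm : k = m
  · subst hkm
    linarith [hL k x y]
  · have hsplit : f k x - f m y = (f k x - f k y) + (f m x - f m y) := by
      rw [hk m (Ne.symm hkm), hm k hkm]; ring
    rw [hsplit]
    linarith [abs_add_le (f k x - f k y) (f m x - f m y), hL k x y, hL m x y]

end DisjointSupport

/-- **Series of bounded Lipschitz functions with pairwise disjoint supports.** If
`(f_k) ⊆ BL(S)` has `sup_k ‖f_k‖_BL < ∞` and the supports (closures of the sets where `f_k ≠ 0`)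
are pairwise disjoint, then `f(x) = Σ_k f_k(x)` converges pointwise, `f ∈ BL(S)`, with
`‖f‖_∞ ≤ sup_k ‖f_k‖_∞` and `|f|_L ≤ 2 · sup_k |f_k|_L`. -/
theorem sum_of_disjointly_supported_BL {S : Type*} [MetricSpace S] (f : ℕ → S → ℝ)
    (hBL : ∀ k, IsBL (f k)) (hbd : ∃ C : ℝ, ∀ k, blNorm (f k) ≤ C)
    (hdisj : ∀ k m, k ≠ m → Disjoint (tsupport (f k)) (tsupport (f m))) :
    (∀ x, Summable (fun k => f k x)) ∧
    IsBL (fun x => ∑' k, f k x) ∧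
    supNorm (fun x => ∑' k, f k x) ≤ sSup (Set.range fun k => supNorm (f k)) ∧
    lipConst (fun x => ∑' k, f k x) ≤ 2 * sSup (Set.range fun k => lipConst (f k)) := by
  obtain ⟨C, hC⟩ := hbd
  have hsupp : Pairwise (Disjoint on fun k => support (f k)) := fun k m hkm =>
    (hdisj k m hkm).mono (subset_tsupport _) (subset_tsupport _)
  set M := sSup (Set.range fun k => supNorm (f k))
  set L := sSup (Set.range fun k => lipConst (f k))
  have hM0 : 0 ≤ M := Real.sSup_nonneg (by rintro _ ⟨k, rfl⟩; exact supNorm_nonneg _)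
  have hL0 : 0 ≤ L := Real.sSup_nonneg (by rintro _ ⟨k, rfl⟩; exact lipConst_nonneg _)
  have hM : ∀ k x, |f k x| ≤ M := fun k x =>
    (abs_le_supNorm (hBL k).1 x).trans <|
      le_csSup ⟨C, by rintro _ ⟨m, rfl⟩; exact (supNorm_le_blNorm _).trans (hC m)⟩ ⟨k, rfl⟩
  have hL : ∀ k x y, |f k x - f k y| ≤ L * dist x y := fun k x y => by
    obtain ⟨K, hK⟩ := (hBL k).2
    refine (hK.abs_sub_le_lipConst x y).trans (mul_le_mul_of_nonneg_right ?_ dist_nonneg)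
    exact le_csSup ⟨C, by rintro _ ⟨m, rfl⟩; exact (lipConst_le_blNorm _).trans (hC m)⟩ ⟨k, rfl⟩
  have hFM x := abs_tsum_le_of_pairwise_disjoint_support hsupp (hM · x)
  have hFL := abs_tsum_sub_tsum_le_of_pairwise_disjoint_support hsupp hL
  exact ⟨summable_of_pairwise_disjoint_support hsupp, isBL_of_bounds hFM hFL,
    supNorm_le hFM hM0, lipConst_le hFL (by positivity)⟩
end

section
/- Let (S,d) be a complete separable metric space and let (μ_n)_{n ≥ 1} be a sequence of finite positive Borel measures on S such that the family {μ_n : n ≥ 1} is not uniformly tight. Then there exist ε > 0, a strictly increasing sequence (n_k) of positive integers and a sequence (K_{n_k}) of compact subsets of S such that μ_{n_k}(K_{n_k}) ≥ ε for all k ≥ 1 and dist(K_{n_k}, K_{n_m}) := inf{ d(x,y) : x ∈ K_{n_k}, y ∈ K_{n_m} } > ε for all k ≠ m. -/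
/-!
In a complete space a family of finite measures is tight as soon as, for all `δ, η > 0`, finitely
many `δ`-balls carry all but `η` of the mass of every member: intersecting such covers by closed
balls of radii `1 / (j + 1)` with errors of finite sum gives a closed, totally bounded set.
So failure of tightness yields `δ, η > 0` such that every finite union of `δ`-balls misses more
than `η` of the mass of some `μ n`. As each single `μ m` is tight, covering a compact `U` together
with compacts carrying `μ 0, …, μ N` by `δ / 4`-balls forces such an `n > N`, and inner regularity
gives a compact `K` of `μ n`-mass `> η` outside the `δ / 2`-neighbourhood of the cover, hence at
distance `> δ / 4` from `U`. Taking for `U` the union of the compacts already chosen produces the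
sequence, with `ε = min (δ / 4) η`.
-/

open MeasureTheory Filter Topology Metric Set
open scoped ENNReal

section PseudoMetric

variable {S : Type*} [PseudoMetricSpace S]

theorem isCompact_iInter_biUnion_closedBall [CompleteSpace S] {t : ℕ → Set S}
    (ht : ∀ j, (t j).Finite) {r : ℕ → ℝ} (hr : Tendsto r atTop (𝓝 0)) :
    IsCompact (⋂ j, ⋃ x ∈ t j, closedBall x (r j)) := by
  refine TotallyBounded.isCompact_of_isClosed ?_
    (isClosed_iInter fun j => (ht j).isClosed_biUnion fun x _ => isClosed_closedBall)
  refine Metric.totallyBounded_iff.2 fun ε hε => ?_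
  obtain ⟨j, hj⟩ := (hr.eventually (gt_mem_nhds hε)).exists
  exact ⟨t j, ht j, (iInter_subset _ j).trans
    (iUnion₂_mono fun x _ => closedBall_subset_ball hj)⟩

theorem exists_strictMono_isCompact_pairwise_lt_dist {P : ℕ → Set S → Prop} {r : ℝ}
    (h : ∀ N U, IsCompact U → ∃ n, N < n ∧ ∃ K, IsCompact K ∧ P n K ∧
      ∀ x ∈ K, ∀ y ∈ U, r < dist x y) :
    ∃ n : ℕ → ℕ, StrictMono n ∧ ∃ K : ℕ → Set S, (∀ k, IsCompact (K k)) ∧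
      (∀ k, P (n k) (K k)) ∧ ∀ k m, k ≠ m → ∀ x ∈ K k, ∀ y ∈ K m, r < dist x y := by
  choose! f hf g hg_cpt hgP hg_sep using h
  obtain ⟨state, h_zero, h_succ⟩ : ∃ state : ℕ → ℕ × Set S, state 0 = (0, ∅) ∧
      ∀ k, state (k + 1) = (f (state k).1 (state k).2,
        (state k).2 ∪ g (state k).1 (state k).2) :=
    ⟨fun k => Nat.rec (0, ∅) (fun _ p => (f p.1 p.2, p.2 ∪ g p.1 p.2)) k, rfl, fun _ => rfl⟩
  have h_cpt : ∀ k, IsCompact (state k).2 := by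
    intro k
    induction k with
    | zero => simp [h_zero]
    | succ k ih => rw [h_succ]; exact ih.union (hg_cpt _ _ ih)
  have h_sub : ∀ i k, i < k → g (state i).1 (state i).2 ⊆ (state k).2 := by
    intro i k hik
    induction k with
    | zero => omega
    | succ k ih =>
      rw [h_succ]
      rcases (Nat.lt_succ_iff.1 hik).lt_or_eq with hik | rfl
      · exact (ih hik).trans subset_union_left
      · exact subset_union_right
  have h_sep : ∀ i k, i < k → ∀ x ∈ g (state k).1 (state k).2, ∀ y ∈ g (state i).1 (state i).2,
      r < dist x y := fun i k hik x hx y hy =>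
    hg_sep _ _ (h_cpt k) x hx y (h_sub i k hik hy)
  refine ⟨fun k => f (state k).1 (state k).2, strictMono_nat_of_lt_succ fun k => ?_,
    fun k => g (state k).1 (state k).2, fun k => hg_cpt _ _ (h_cpt k),
    fun k => hgP _ _ (h_cpt k), fun k m hkm x hx y hy => ?_⟩
  · simpa [h_succ] using hf _ _ (h_cpt (k + 1))
  · rcases hkm.lt_or_gt with hkm | hkm
    · exact dist_comm x y ▸ h_sep k m hkm y hy x hx
    · exact h_sep m k hkm x hx y hy

variable [MeasurableSpace S]

theorem isTightMeasureSet_of_forall_exists_finite_measure_compl_biUnion_ball_le [CompleteSpace S]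
    {M : Set (Measure S)}
    (h : ∀ δ > 0, ∀ η > 0, ∃ t : Set S, t.Finite ∧ ∀ μ ∈ M, μ (⋃ x ∈ t, ball x δ)ᶜ ≤ η) :
    IsTightMeasureSet M := by
  refine isTightMeasureSet_iff_exists_isCompact_measure_compl_le.2 fun ε hε => ?_
  obtain ⟨η, hη_pos, hη_sum⟩ := ENNReal.exists_pos_sum_of_countable hε.ne' ℕ
  choose t ht_fin ht using fun j : ℕ =>
    h (1 / (j + 1)) Nat.one_div_pos_of_nat (η j) (ENNReal.coe_pos.2 (hη_pos j))
  refine ⟨_, isCompact_iInter_biUnion_closedBall ht_fin tendsto_one_div_add_atTop_nhds_zero_nat,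
    fun μ hμ => ?_⟩
  calc μ (⋂ j, ⋃ x ∈ t j, closedBall x (1 / (j + 1 : ℝ)))ᶜ
      ≤ μ (⋃ j, (⋃ x ∈ t j, ball x (1 / (j + 1 : ℝ)))ᶜ) := by
        rw [compl_iInter]
        exact measure_mono (iUnion_mono fun j =>
          compl_subset_compl.2 (iUnion₂_mono fun x _ => ball_subset_closedBall))
    _ ≤ ∑' j, μ (⋃ x ∈ t j, ball x (1 / (j + 1 : ℝ)))ᶜ := measure_iUnion_le _
    _ ≤ ∑' j, (η j : ℝ≥0∞) := ENNReal.tsum_le_tsum fun j => ht j μ hμ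
    _ ≤ ε := hη_sum.le

theorem MeasureTheory.IsTightMeasureSet.exists_isCompact_measure_compl_lt {M : Set (Measure S)}
    (hM : IsTightMeasureSet M) {ε : ℝ≥0∞} (hε : 0 < ε) :
    ∃ K, IsCompact K ∧ ∀ μ ∈ M, μ Kᶜ < ε := by
  obtain ⟨ε', hε'_pos, hε'ε⟩ := exists_between hε
  obtain ⟨K, hK, hKμ⟩ := isTightMeasureSet_iff_exists_isCompact_measure_compl_le.1 hM ε' hε'_pos
  exact ⟨K, hK, fun μ hμ => (hKμ μ hμ).trans_lt hε'ε⟩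

end PseudoMetric

section Measures

variable {S : Type*} [PseudoMetricSpace S] [CompleteSpace S] [TopologicalSpace.SeparableSpace S]
  [MeasurableSpace S] [BorelSpace S]

theorem exists_gt_isCompact_lt_measure_of_forall_lt_measure_compl_biUnion_ball
    (μ : ℕ → Measure S) [∀ n, IsFiniteMeasure (μ n)] {δ : ℝ} (hδ : 0 < δ) {η : ℝ≥0∞}
    (hη : 0 < η) (h : ∀ t : Set S, t.Finite → ∃ n, η < μ n (⋃ x ∈ t, ball x δ)ᶜ)
    (N : ℕ) {U : Set S} (hU : IsCompact U) :
    ∃ n, N < n ∧ ∃ K, IsCompact K ∧ η < μ n K ∧ ∀ x ∈ K, ∀ y ∈ U, δ / 4 < dist x y := by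
  choose C hC hCμ using fun m =>
    (isTightMeasureSet_singleton (μ := μ m)).exists_isCompact_measure_compl_lt hη
  obtain ⟨t, -, ht, hVt⟩ := (hU.union ((finite_Iic N).isCompact_biUnion fun m _ => hC m))
    |>.finite_cover_balls (by positivity : 0 < δ / 4)
  obtain ⟨n, hn⟩ := h t ht
  -- `t` also covers compacts carrying most of the mass of `μ 0, …, μ N`, which rules out `n ≤ N`.
  have hnN : N < n := by
    by_contra! hnN
    have hCn : (⋃ x ∈ t, ball x δ)ᶜ ⊆ (C n)ᶜ := compl_subset_compl.2 fun y hy =>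
      iUnion₂_mono (fun x _ => ball_subset_ball (by linarith)) (hVt (Or.inr (mem_biUnion hnN hy)))
    exact (hn.trans_le (measure_mono hCn)).not_gt (hCμ n _ rfl)
  have hG : IsOpen (⋃ x ∈ t, closedBall x (δ / 2))ᶜ :=
    (ht.isClosed_biUnion fun x _ => isClosed_closedBall).isOpen_compl
  have hηG : η < μ n (⋃ x ∈ t, closedBall x (δ / 2))ᶜ := hn.trans_le <| measure_mono <|
    compl_subset_compl.2 <| iUnion₂_mono fun x _ => closedBall_subset_ball (by linarith)
  obtain ⟨K, hKG, hK, hKμ⟩ := hG.measurableSet.exists_lt_isCompact hηG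
  refine ⟨n, hnN, K, hK, hKμ, fun x hx y hy => ?_⟩
  obtain ⟨z, hz, hyz⟩ := mem_iUnion₂.1 (hVt (Or.inl hy))
  have hxz : δ / 2 < dist x z := not_le.1 fun hxz => hKG hx (mem_biUnion hz (mem_closedBall.2 hxz))
  linarith [dist_triangle x y z, mem_ball.1 hyz]

end Measures

/-- **Non-tight sequences of positive measures admit uniformly separated compact sets of
uniformly positive measure.** If `(μ_n)` is a sequence of finite positive Borel measures on a
complete separable metric space whose family is not uniformly tight, then there are `ε > 0`, a
strictly increasing sequence `(n_k)` and compact sets `(K_{n_k})` with `μ_{n_k}(K_{n_k}) ≥ ε`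
for all `k` and `dist(K_{n_k}, K_{n_m}) > ε` for `k ≠ m`. -/
theorem separated_compacts_of_not_tight {S : Type*} [MetricSpace S] [CompleteSpace S]
    [TopologicalSpace.SeparableSpace S] [MeasurableSpace S] [BorelSpace S]
    (μ : ℕ → Measure S) (hfin : ∀ n, IsFiniteMeasure (μ n))
    (hnt : ¬ ∀ ε : ℝ, 0 < ε → ∃ K : Set S, IsCompact K ∧ ∀ n, μ n Kᶜ < ENNReal.ofReal ε) :
    ∃ ε : ℝ, 0 < ε ∧ ∃ n : ℕ → ℕ, StrictMono n ∧ ∃ K : ℕ → Set S,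
      (∀ k, IsCompact (K k)) ∧
      (∀ k, ENNReal.ofReal ε ≤ μ (n k) (K k)) ∧
      (∀ k m, k ≠ m → ∀ x ∈ K k, ∀ y ∈ K m, ε < dist x y) := by
  have hM : ¬ IsTightMeasureSet (range μ) := fun hM => hnt fun ε hε => by
    simpa using hM.exists_isCompact_measure_compl_lt (ENNReal.ofReal_pos.2 hε)
  obtain ⟨δ, hδ, η, hη, hfar⟩ : ∃ δ > 0, ∃ η > 0,
      ∀ t : Set S, t.Finite → ∃ n, η < μ n (⋃ x ∈ t, ball x δ)ᶜ := by
    simpa using mt isTightMeasureSet_of_forall_exists_finite_measure_compl_biUnion_ball_le hM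
  have hη_top : η ≠ ⊤ := by
    obtain ⟨n, hn⟩ := hfar ∅ finite_empty
    exact ne_top_of_lt hn
  obtain ⟨n, hn, K, hK, hKμ, hKsep⟩ := exists_strictMono_isCompact_pairwise_lt_dist
    (exists_gt_isCompact_lt_measure_of_forall_lt_measure_compl_biUnion_ball
      μ hδ hη hfar)
  refine ⟨min (δ / 4) η.toReal, lt_min (by positivity) (ENNReal.toReal_pos hη.ne' hη_top),
    n, hn, K, hK, fun k => ?_,
    fun k m hkm x hx y hy => (min_le_left _ _).trans_lt (hKsep k m hkm x hx y hy)⟩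
  exact (ENNReal.ofReal_le_of_le_toReal (min_le_right _ _)).trans (hKμ k).le
end

section
/- Let (S,d) be a metric space, let (μ_n)_{n ≥ 1} be a sequence of finite positive Borel measures on S with sup_n μ_n(S) < ∞, and let (E_n)_{n ≥ 1} be a sequence of pairwise disjoint Borel subsets of S. Then for every ε > 0 there exists a strictly increasing sequence (n_i)_{i ≥ 1} of positive integers such that for every i ≥ 1, μ_{n_i}( ⋃_{j ≠ i} E_{n_j} ) < ε. -/
open MeasureTheory ENNReal Function

/-!
Build the subsequence greedily, together with a decreasing sequence of infinite reservoirs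
`A₀ ⊇ A₁ ⊇ ⋯` of admissible later indices. At step `k` pick `nₖ` in the current reservoir and
shrink the reservoir so that every later measure gives `E_{nₖ}` mass `< δₖ` (with `∑ δₖ < ε/2`),
and `μ_{nₖ}` gives the union of the sets indexed by the reservoir mass `< ε/2`. The second
condition is a tail estimate for the finite measure `μ_{nₖ}`. The first is possible because
the sets are disjoint and the masses uniformly bounded by `C`: a single `μ_m` can give mass `≥ δ`
to at most `C / δ` of the `E_n`, so some `n` in the reservoir has `μ_m (E_n) < δ` for infinitely
many `m` in it.
-/

section Selection

variable {S : Type*} [MeasurableSpace S] {E : ℕ → Set S}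

theorem exists_mem_infinite_setOf_measure_lt {μ : ℕ → Measure S} {C δ : ℝ≥0∞} (hC : C ≠ ⊤)
    (hμ : ∀ n, μ n Set.univ ≤ C) (hE : ∀ n, MeasurableSet (E n))
    (hdisj : Pairwise (Disjoint on E)) (hδ : δ ≠ 0) {A : Set ℕ} (hA : A.Infinite) :
    ∃ n ∈ A, {m | m ∈ A ∧ μ m (E n) < δ}.Infinite := by
  by_contra! hfin
  obtain ⟨k, hk⟩ := ENNReal.exists_nat_mul_gt hδ hC
  obtain ⟨T, hTA, rfl⟩ := hA.exists_subset_card_eq k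
  have hU : (⋃ n ∈ T, {m | m ∈ A ∧ μ m (E n) < δ}).Finite :=
    T.finite_toSet.biUnion fun n hn => hfin n (hTA hn)
  obtain ⟨m, hmA, hm⟩ := (hA.sdiff hU).nonempty
  have hlarge : ∀ n ∈ T, δ ≤ μ m (E n) := fun n hn =>
    not_lt.1 fun h => hm (Set.mem_biUnion hn ⟨hmA, h⟩)
  refine (hk.trans_le ?_).not_ge (hμ m)
  calc (T.card : ℝ≥0∞) * δ = ∑ _n ∈ T, δ := by simp
    _ ≤ ∑ n ∈ T, μ m (E n) := Finset.sum_le_sum hlarge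
    _ ≤ μ m Set.univ := sum_measure_le_measure_univ (fun n _ => (hE n).nullMeasurableSet)
        fun a _ b _ hab => (hdisj hab).aedisjoint

theorem exists_measure_biUnion_ge_lt (ν : Measure S) [IsFiniteMeasure ν]
    (hE : ∀ n, MeasurableSet (E n)) (hdisj : Pairwise (Disjoint on E)) {θ : ℝ≥0∞}
    (hθ : θ ≠ 0) : ∃ M, ν (⋃ m ≥ M, E m) < θ := by
  have hsum : ∑' m, ν (E m) ≠ ⊤ := by
    rw [← measure_iUnion hdisj hE]
    exact measure_ne_top ν _
  obtain ⟨M, hM⟩ :=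
    ((ENNReal.tendsto_sum_nat_add _ hsum).eventually_lt_const (pos_iff_ne_zero.2 hθ)).exists
  refine ⟨M, lt_of_le_of_lt ?_ hM⟩
  calc ν (⋃ m ≥ M, E m) ≤ ν (⋃ i, E (i + M)) := by
        refine measure_mono (Set.iUnion₂_subset fun m hm => ?_)
        rw [← Nat.sub_add_cancel hm]
        exact Set.subset_iUnion (fun i => E (i + M)) (m - M)
    _ ≤ ∑' i, ν (E (i + M)) := measure_iUnion_le _

theorem exists_mem_infinite_subset_measure_lt {μ : ℕ → Measure S} {C δ θ : ℝ≥0∞}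
    (hC : C ≠ ⊤) (hμ : ∀ n, μ n Set.univ ≤ C) (hE : ∀ n, MeasurableSet (E n))
    (hdisj : Pairwise (Disjoint on E)) (hδ : δ ≠ 0) (hθ : θ ≠ 0) {A : Set ℕ}
    (hA : A.Infinite) :
    ∃ n ∈ A, ∃ A' ⊆ A, A'.Infinite ∧ (∀ m ∈ A', n < m ∧ μ m (E n) < δ) ∧
      μ n (⋃ m ∈ A', E m) < θ := by
  obtain ⟨n, hnA, hgood⟩ := exists_mem_infinite_setOf_measure_lt hC hμ hE hdisj hδ hA
  have : IsFiniteMeasure (μ n) := ⟨(hμ n).trans_lt hC.lt_top⟩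
  obtain ⟨M, hM⟩ := exists_measure_biUnion_ge_lt (μ n) hE hdisj hθ
  refine ⟨n, hnA, {m | m ∈ A ∧ μ m (E n) < δ} \ Set.Iic (max n M), fun m hm => hm.1.1,
    hgood.sdiff (Set.finite_Iic _), fun m hm => ?_, lt_of_le_of_lt (measure_mono ?_) hM⟩
  · exact ⟨(le_max_left n M).trans_lt (not_le.1 hm.2), hm.1.2⟩
  · exact Set.iUnion₂_mono' fun m hm => ⟨m, (le_max_right n M).trans (not_le.1 hm.2).le, le_rfl⟩

end Selection

theorem exists_seq_antitone_of_forall_infinite {P : ℕ → ℕ → Set ℕ → Prop}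
    (h : ∀ k (A : Set ℕ), A.Infinite → ∃ n ∈ A, ∃ A' ⊆ A, A'.Infinite ∧ P k n A') :
    ∃ (n : ℕ → ℕ) (A : ℕ → Set ℕ), Antitone A ∧ (∀ i, n (i + 1) ∈ A i) ∧
      ∀ i, P i (n i) (A i) := by
  choose N hN A' hA'sub hA'inf hP using h
  let B : ℕ → {A : Set ℕ // A.Infinite} := fun k =>
    Nat.rec ⟨Set.univ, Set.infinite_univ⟩ (fun k B => ⟨A' k B B.2, hA'inf k B B.2⟩) k
  exact ⟨fun k => N k (B k).1 (B k).2, fun k => A' k (B k).1 (B k).2,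
    antitone_nat_of_succ_le fun k => hA'sub (k + 1) (B (k + 1)).1 (B (k + 1)).2,
    fun k => hN (k + 1) (B (k + 1)).1 (B (k + 1)).2,
    fun k => hP k (B k).1 (B k).2⟩

theorem measure_biUnion_ne_lt_of_antitone {S : Type*} [MeasurableSpace S] {μ : ℕ → Measure S}
    {E : ℕ → Set S} {n : ℕ → ℕ} {A : ℕ → Set ℕ} {δ : ℕ → ℝ≥0∞} {θ : ℝ≥0∞}
    (hδ : ∑' j, δ j ≠ ⊤) (hA : Antitone A) (hmem : ∀ i, n (i + 1) ∈ A i)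
    (hpast : ∀ i, ∀ m ∈ A i, μ m (E (n i)) < δ i) (hfuture : ∀ i, μ (n i) (⋃ m ∈ A i, E m) < θ)
    (i : ℕ) : μ (n i) (⋃ j ∈ {j : ℕ | j ≠ i}, E (n j)) < ∑' j, δ j + θ := by
  have hmem_of_lt : ∀ {j k}, j < k → n k ∈ A j := fun {j k} hjk => by
    obtain ⟨k, rfl⟩ := Nat.exists_eq_add_of_lt hjk
    exact hA (Nat.le_add_right j k) (hmem _)
  have hsplit : ⋃ j ∈ {j : ℕ | j ≠ i}, E (n j) ⊆
      (⋃ j ∈ Finset.range i, E (n j)) ∪ ⋃ m ∈ A i, E m := by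
    refine Set.iUnion₂_subset fun j hji => ?_
    rcases (Ne.lt_or_gt hji) with hlt | hgt
    · exact Set.subset_union_of_subset_left
        (Set.subset_biUnion_of_mem (u := fun j => E (n j)) (Finset.mem_range.2 hlt)) _
    · exact Set.subset_union_of_subset_right
        (Set.subset_biUnion_of_mem (u := E) (hmem_of_lt hgt)) _
  have hpast_le : μ (n i) (⋃ j ∈ Finset.range i, E (n j)) ≤ ∑' j, δ j :=
    (measure_biUnion_finset_le _ _).trans <|
      (Finset.sum_le_sum fun j hj => (hpast j _ (hmem_of_lt (Finset.mem_range.1 hj))).le).trans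
        (ENNReal.sum_le_tsum _)
  calc μ (n i) (⋃ j ∈ {j : ℕ | j ≠ i}, E (n j))
      ≤ μ (n i) (⋃ j ∈ Finset.range i, E (n j)) + μ (n i) (⋃ m ∈ A i, E m) :=
        (measure_mono hsplit).trans (measure_union_le _ _)
    _ < ∑' j, δ j + θ :=
        ENNReal.add_lt_add_of_le_of_lt (ne_top_of_le_ne_top hδ hpast_le) hpast_le (hfuture i)

theorem subsequence_small_on_disjoint_sets_general {S : Type*} [MeasurableSpace S]
    (μ : ℕ → Measure S)
    (hbd : ∃ C : ℝ≥0∞, C ≠ ⊤ ∧ ∀ n, μ n Set.univ ≤ C)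
    (E : ℕ → Set S) (hE : ∀ n, MeasurableSet (E n))
    (hdisj : ∀ n m, n ≠ m → Disjoint (E n) (E m)) :
    ∀ ε : ℝ, 0 < ε → ∃ n : ℕ → ℕ, StrictMono n ∧
      ∀ i : ℕ, μ (n i) (⋃ j ∈ {j : ℕ | j ≠ i}, E (n j)) < ENNReal.ofReal ε := by
  intro ε hε
  obtain ⟨C, hC, hμ⟩ := hbd
  have hε2 : ENNReal.ofReal ε / 2 ≠ 0 := by simpa using hε
  obtain ⟨δ, hδ, hδsum⟩ := ENNReal.exists_pos_sum_of_countable' hε2 ℕ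
  obtain ⟨n, A, hA, hmem, hstep⟩ := exists_seq_antitone_of_forall_infinite
    (P := fun k n A' => (∀ m ∈ A', n < m ∧ μ m (E n) < δ k) ∧
      μ n (⋃ m ∈ A', E m) < ENNReal.ofReal ε / 2)
    fun k A hA' => exists_mem_infinite_subset_measure_lt hC hμ hE hdisj (hδ k).ne' hε2 hA'
  refine ⟨n, strictMono_nat_of_lt_succ fun i => ((hstep i).1 _ (hmem i)).1, fun i => ?_⟩
  calc _ < ∑' j, δ j + ENNReal.ofReal ε / 2 :=
        measure_biUnion_ne_lt_of_antitone (ne_top_of_lt hδsum) hA hmem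
          (fun i m hm => ((hstep i).1 m hm).2) (fun i => (hstep i).2) i
    _ ≤ ENNReal.ofReal ε / 2 + ENNReal.ofReal ε / 2 := by gcongr
    _ = ENNReal.ofReal ε := ENNReal.add_halves _

/-- **Subsequence avoiding disjoint sets.** Let `(μ_n)` be a sequence of finite positive Borel
measures on a metric space with `sup_n μ_n(S) < ∞` and let `(E_n)` be pairwise disjoint Borel
sets. Then for every `ε > 0` there is a strictly increasing sequence `(n_i)` such that
`μ_{n_i}(⋃_{j ≠ i} E_{n_j}) < ε` for every `i`. -/
theorem subsequence_small_on_disjoint_sets {S : Type*} [MetricSpace S] [MeasurableSpace S]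
    [BorelSpace S]
    (μ : ℕ → Measure S) (hfin : ∀ n, IsFiniteMeasure (μ n))
    (hbd : ∃ C : ℝ≥0∞, C ≠ ⊤ ∧ ∀ n, μ n Set.univ ≤ C)
    (E : ℕ → Set S) (hE : ∀ n, MeasurableSet (E n))
    (hdisj : ∀ n m, n ≠ m → Disjoint (E n) (E m)) :
    ∀ ε : ℝ, 0 < ε → ∃ n : ℕ → ℕ, StrictMono n ∧
      ∀ i : ℕ, μ (n i) (⋃ j ∈ {j : ℕ | j ≠ i}, E (n j)) < ENNReal.ofReal ε :=
  subsequence_small_on_disjoint_sets_general μ hbd E hE hdisj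
end
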